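/- arXiv:2512.21270 — 5 statements merged into one kernel-verified Lean document; each statement's English description precedes it below -/
import Mathlib

section
/- Let V be a 2-dimensional real inner product space and let C : V → V be a self-adjoint, positive-definite linear endomorphism. Then the following are equivalent: (i) for all nonzero u, v ∈ V one has ⟨u, v⟩/(‖u‖‖v‖) = ⟨u, C v⟩/(⟨u, C u⟩^{1/2} ⟨v, C v⟩^{1/2}); (ii) there exists λ > 0 such that C = λ² · id_V. -/
open scoped RealInnerProductSpace

/-- **Characterization of conformal Cauchy–Green tensors** (Proposition 5.1).
A self-adjoint, positive-definite endomorphism `C` of a 2-dimensional real inner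
product space preserves all angles iff it is `λ² • id` for some `λ > 0`. -/
theorem conformal_iff_isotropic
    {V : Type*} [NormedAddCommGroup V] [InnerProductSpace ℝ V]
    (hdim : Module.finrank ℝ V = 2)
    (C : V →ₗ[ℝ] V)
    (hsym : ∀ u v : V, ⟪C u, v⟫ = ⟪u, C v⟫)
    (hpos : ∀ v : V, v ≠ 0 → 0 < ⟪v, C v⟫) :
    (∀ u v : V, u ≠ 0 → v ≠ 0 →
        ⟪u, v⟫ / (‖u‖ * ‖v‖) =
          ⟪u, C v⟫ / (Real.sqrt ⟪u, C u⟫ * Real.sqrt ⟪v, C v⟫)) ↔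
      (∃ l : ℝ, 0 < l ∧ C = (l ^ 2) • LinearMap.id) := by
  have hfd : FiniteDimensional ℝ V := FiniteDimensional.of_finrank_eq_succ hdim
  constructor
  · intro h
    -- orthogonality is preserved
    have horth : ∀ u v : V, u ≠ 0 → v ≠ 0 → ⟪u, v⟫ = 0 → ⟪u, C v⟫ = 0 := by
      intro u v hu hv huv
      have := h u v hu hv
      rw [huv, zero_div] at this
      have hsu : Real.sqrt ⟪u, C u⟫ > 0 := Real.sqrt_pos.mpr (hpos u hu)
      have hsv : Real.sqrt ⟪v, C v⟫ > 0 := Real.sqrt_pos.mpr (hpos v hv)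
      have hmul : Real.sqrt ⟪u, C u⟫ * Real.sqrt ⟪v, C v⟫ ≠ 0 :=
        ne_of_gt (mul_pos hsu hsv)
      exact (div_eq_zero_iff.mp this.symm).resolve_right hmul
    -- orthonormal basis
    let b : OrthonormalBasis (Fin 2) ℝ V :=
      (stdOrthonormalBasis ℝ V).reindex (finCongr hdim)
    have hb : Orthonormal ℝ b := b.orthonormal
    have hne : ∀ i, b i ≠ 0 := fun i =>
      fun h0 => by simpa [h0] using hb.1 i
    have h01 : ⟪b 0, b 1⟫ = 0 := hb.2 (by decide)
    have h10 : ⟪b 1, b 0⟫ = 0 := hb.2 (by decide)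
    have hc01 : ⟪b 0, C (b 1)⟫ = 0 := horth _ _ (hne 0) (hne 1) h01
    have hc10 : ⟪b 1, C (b 0)⟫ = 0 := horth _ _ (hne 1) (hne 0) h10
    set a : ℝ := ⟪b 0, C (b 0)⟫ with ha
    have hapos : 0 < a := hpos _ (hne 0)
    -- u = b0 + b1, v = b0 - b1 are orthogonal and nonzero
    have hn0 : ‖b 0‖ = 1 := hb.1 0
    have hn1 : ‖b 1‖ = 1 := hb.1 1
    have hinner00 : ⟪b 0, b 0⟫ = 1 := by
      rw [real_inner_self_eq_norm_sq, hn0]; norm_num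
    have hinner11 : ⟪b 1, b 1⟫ = 1 := by
      rw [real_inner_self_eq_norm_sq, hn1]; norm_num
    have hu : (b 0 + b 1) ≠ 0 := by
      intro h0
      have : ⟪b 0, b 0 + b 1⟫ = 0 := by rw [h0, inner_zero_right]
      rw [inner_add_right, hinner00, h01] at this
      norm_num at this
    have hv : (b 0 - b 1) ≠ 0 := by
      intro h0
      have : ⟪b 0, b 0 - b 1⟫ = 0 := by rw [h0, inner_zero_right]
      rw [inner_sub_right, hinner00, h01] at this
      norm_num at this
    have huv : ⟪b 0 + b 1, b 0 - b 1⟫ = 0 := by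
      rw [inner_sub_right, inner_add_left, inner_add_left, hinner00, hinner11, h01, h10]
      ring
    have key : ⟪b 0 + b 1, C (b 0 - b 1)⟫ = 0 := horth _ _ hu hv huv
    have hbb : ⟪b 1, C (b 1)⟫ = a := by
      have hc1 : C (b 0 - b 1) = C (b 0) - C (b 1) := map_sub C _ _
      rw [hc1, inner_sub_right, inner_add_left, inner_add_left, hc01,
        hc10] at key
      have h01c : ⟪b 0, C (b 1)⟫ = 0 := hc01
      linarith [key]
    -- C (b i) = a • (b i)
    have hC0 : C (b 0) = a • b 0 := by
      have := b.sum_repr' (C (b 0))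
      rw [Fin.sum_univ_two, hc10, ← ha] at this
      rw [← this]; simp
    have hC1 : C (b 1) = a • b 1 := by
      have := b.sum_repr' (C (b 1))
      rw [Fin.sum_univ_two, hc01, hbb] at this
      rw [← this]; simp
    refine ⟨Real.sqrt a, Real.sqrt_pos.mpr hapos, ?_⟩
    have hsq : (Real.sqrt a) ^ 2 = a := Real.sq_sqrt hapos.le
    apply b.toBasis.ext
    intro i
    fin_cases i <;>
      simp [hsq, hC0, hC1]
  · rintro ⟨l, hl, rfl⟩
    intro u v hu hv
    have hnu : ‖u‖ ≠ 0 := norm_ne_zero_iff.mpr hu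
    have hnv : ‖v‖ ≠ 0 := norm_ne_zero_iff.mpr hv
    have huu : ⟪u, ((l ^ 2) • LinearMap.id : V →ₗ[ℝ] V) u⟫ = l ^ 2 * ‖u‖ ^ 2 := by
      simp [real_inner_smul_right, real_inner_self_eq_norm_sq]
    have hvv : ⟪v, ((l ^ 2) • LinearMap.id : V →ₗ[ℝ] V) v⟫ = l ^ 2 * ‖v‖ ^ 2 := by
      simp [real_inner_smul_right, real_inner_self_eq_norm_sq]
    have huv : ⟪u, ((l ^ 2) • LinearMap.id : V →ₗ[ℝ] V) v⟫ = l ^ 2 * ⟪u, v⟫ := by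
      simp [real_inner_smul_right]
    rw [huu, hvv, huv]
    have hsu : Real.sqrt (l ^ 2 * ‖u‖ ^ 2) = l * ‖u‖ := by
      rw [← mul_pow, Real.sqrt_sq (by positivity)]
    have hsv : Real.sqrt (l ^ 2 * ‖v‖ ^ 2) = l * ‖v‖ := by
      rw [← mul_pow, Real.sqrt_sq (by positivity)]
    rw [hsu, hsv]
    field_simp
end

section
/- Let Ω ⊆ ℝ² be open and let r : Ω → ℝ³ be a C³ immersion whose coordinates are orthogonal, i.e. F = r_u·r_v ≡ 0 on Ω. Set a = |r_u| and b = |r_v| (both positive on Ω). Then the Gaussian curvature of r satisfies the metric curvature formula K = −(1/(a b)) [ ∂_u( (∂_u b)/a ) + ∂_v( (∂_v a)/b ) ] at every point of Ω. -/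
noncomputable section

/-- Euclidean dot product on `ℝ³`. -/
def dot3 (x y : Fin 3 → ℝ) : ℝ := x 0 * y 0 + x 1 * y 1 + x 2 * y 2

/-- Cross product on `ℝ³`. -/
def cross3 (x y : Fin 3 → ℝ) : Fin 3 → ℝ :=
  ![x 1 * y 2 - x 2 * y 1, x 2 * y 0 - x 0 * y 2, x 0 * y 1 - x 1 * y 0]

/-- Euclidean length on `ℝ³`. -/
def len3 (x : Fin 3 → ℝ) : ℝ := Real.sqrt (dot3 x x)

/-- Partial derivative in the first variable. -/
def du {E : Type*} [NormedAddCommGroup E] [NormedSpace ℝ E]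
    (f : ℝ × ℝ → E) (p : ℝ × ℝ) : E := fderiv ℝ f p (1, 0)

/-- Partial derivative in the second variable. -/
def dv {E : Type*} [NormedAddCommGroup E] [NormedSpace ℝ E]
    (f : ℝ × ℝ → E) (p : ℝ × ℝ) : E := fderiv ℝ f p (0, 1)

/-- First fundamental form coefficient `E = r_u · r_u`. -/
def Icoef₁ (r : ℝ × ℝ → Fin 3 → ℝ) (p : ℝ × ℝ) : ℝ := dot3 (du r p) (du r p)

/-- First fundamental form coefficient `F = r_u · r_v`. -/
def Icoef₂ (r : ℝ × ℝ → Fin 3 → ℝ) (p : ℝ × ℝ) : ℝ := dot3 (du r p) (dv r p)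

/-- First fundamental form coefficient `G = r_v · r_v`. -/
def Icoef₃ (r : ℝ × ℝ → Fin 3 → ℝ) (p : ℝ × ℝ) : ℝ := dot3 (dv r p) (dv r p)

/-- Unit normal `n = (r_u × r_v)/|r_u × r_v|`. -/
def unitNormal (r : ℝ × ℝ → Fin 3 → ℝ) (p : ℝ × ℝ) : Fin 3 → ℝ :=
  (len3 (cross3 (du r p) (dv r p)))⁻¹ • cross3 (du r p) (dv r p)

/-- Second fundamental form coefficient `L = r_uu · n`. -/
def IIcoef₁ (r : ℝ × ℝ → Fin 3 → ℝ) (p : ℝ × ℝ) : ℝ := dot3 (du (du r) p) (unitNormal r p)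

/-- Second fundamental form coefficient `M = r_uv · n`. -/
def IIcoef₂ (r : ℝ × ℝ → Fin 3 → ℝ) (p : ℝ × ℝ) : ℝ := dot3 (dv (du r) p) (unitNormal r p)

/-- Second fundamental form coefficient `N = r_vv · n`. -/
def IIcoef₃ (r : ℝ × ℝ → Fin 3 → ℝ) (p : ℝ × ℝ) : ℝ := dot3 (dv (dv r) p) (unitNormal r p)

/-- Gaussian curvature `K = (LN − M²)/(EG − F²)`. -/
def gaussK (r : ℝ × ℝ → Fin 3 → ℝ) (p : ℝ × ℝ) : ℝ :=
  (IIcoef₁ r p * IIcoef₃ r p - IIcoef₂ r p ^ 2) /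
    (Icoef₁ r p * Icoef₃ r p - Icoef₂ r p ^ 2)

/-- Mean curvature `H = (EN − 2FM + GL)/(2(EG − F²))`. -/
def meanH (r : ℝ × ℝ → Fin 3 → ℝ) (p : ℝ × ℝ) : ℝ :=
  (Icoef₁ r p * IIcoef₃ r p - 2 * Icoef₂ r p * IIcoef₂ r p + Icoef₃ r p * IIcoef₁ r p) /
    (2 * (Icoef₁ r p * Icoef₃ r p - Icoef₂ r p ^ 2))

/-! In the orthonormal frame `r_u/a, r_v/b, n`, Parseval's identity turns `LN - M²` into
`r_uu·r_vv - r_uv·r_uv` plus products of tangential components of second derivatives.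
Differentiating `a² = r_u·r_u`, `b² = r_v·r_v` and `r_u·r_v = 0` expresses all those
components through `a`, `b` and their first derivatives, e.g. `r_uu·r_v = -a a_v` and
`r_uv·r_v = b b_u`. Gauss's observation is that `r_uu·r_vv - r_uv·r_uv` is then intrinsic too:
it equals `∂_v(r_uu·r_v) - ∂_u(r_uv·r_v)`, because the third derivatives `r_uuv = r_uvu` cancel.
Dividing by `EG = a²b²` gives the formula. -/

open Filter Topology

section VectorAlgebra

variable {x y : Fin 3 → ℝ}

lemma dot3_comm (x y : Fin 3 → ℝ) : dot3 x y = dot3 y x := by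
  unfold dot3; ring

lemma dot3_smul_right (c : ℝ) (x y : Fin 3 → ℝ) : dot3 x (c • y) = c * dot3 x y := by
  simp only [dot3, Pi.smul_apply, smul_eq_mul]; ring

lemma dot3_self_nonneg (x : Fin 3 → ℝ) : 0 ≤ dot3 x x := by
  unfold dot3
  exact add_nonneg (add_nonneg (mul_self_nonneg _) (mul_self_nonneg _)) (mul_self_nonneg _)

lemma dot3_self_ne_zero (hx : x ≠ 0) : dot3 x x ≠ 0 := by
  contrapose! hx
  unfold dot3 at hx
  have h0 : x 0 = 0 := by nlinarith [sq_nonneg (x 0), sq_nonneg (x 1), sq_nonneg (x 2)]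
  have h1 : x 1 = 0 := by nlinarith [sq_nonneg (x 0), sq_nonneg (x 1), sq_nonneg (x 2)]
  have h2 : x 2 = 0 := by nlinarith [sq_nonneg (x 0), sq_nonneg (x 1), sq_nonneg (x 2)]
  ext i
  fin_cases i <;> assumption

lemma len3_mul_self (x : Fin 3 → ℝ) : len3 x * len3 x = dot3 x x :=
  Real.mul_self_sqrt (dot3_self_nonneg x)

lemma len3_ne_zero (hx : x ≠ 0) : len3 x ≠ 0 :=
  (Real.sqrt_pos.mpr ((dot3_self_nonneg x).lt_of_ne' (dot3_self_ne_zero hx))).ne'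

lemma ne_zero_left_of_cross3_ne_zero (h : cross3 x y ≠ 0) : x ≠ 0 := by
  rintro rfl
  exact h (by ext i; fin_cases i <;> simp [cross3])

lemma ne_zero_right_of_cross3_ne_zero (h : cross3 x y ≠ 0) : y ≠ 0 := by
  rintro rfl
  exact h (by ext i; fin_cases i <;> simp [cross3])

lemma dot3_cross3_self (x y : Fin 3 → ℝ) :
    dot3 (cross3 x y) (cross3 x y) = dot3 x x * dot3 y y - dot3 x y ^ 2 := by
  simp only [dot3, cross3, Matrix.cons_val_zero, Matrix.cons_val_one, Matrix.cons_val_two,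
    Matrix.head_cons, Matrix.tail_cons]
  ring

lemma dot3_cross3_mul_dot3_cross3 (w z x y : Fin 3 → ℝ) :
    dot3 w (cross3 x y) * dot3 z (cross3 x y) =
      dot3 w z * (dot3 x x * dot3 y y - dot3 x y ^ 2)
      - dot3 w x * (dot3 z x * dot3 y y - dot3 z y * dot3 x y)
      + dot3 w y * (dot3 z x * dot3 x y - dot3 z y * dot3 x x) := by
  simp only [dot3, cross3, Matrix.cons_val_zero, Matrix.cons_val_one, Matrix.cons_val_two,
    Matrix.head_cons, Matrix.tail_cons]
  ring

lemma dot3_unitCross_mul_dot3_unitCross (hxy : dot3 x y = 0) (hx : x ≠ 0) (hy : y ≠ 0)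
    (w z : Fin 3 → ℝ) :
    dot3 w ((len3 (cross3 x y))⁻¹ • cross3 x y) * dot3 z ((len3 (cross3 x y))⁻¹ • cross3 x y) =
      dot3 w z - dot3 w x * dot3 z x / dot3 x x - dot3 w y * dot3 z y / dot3 y y := by
  have hxx := dot3_self_ne_zero hx
  have hyy := dot3_self_ne_zero hy
  calc dot3 w ((len3 (cross3 x y))⁻¹ • cross3 x y) * dot3 z ((len3 (cross3 x y))⁻¹ • cross3 x y)
      = dot3 w (cross3 x y) * dot3 z (cross3 x y) / (len3 (cross3 x y) * len3 (cross3 x y)) := by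
        rw [dot3_smul_right, dot3_smul_right]; ring
    _ = _ := by
        rw [len3_mul_self, dot3_cross3_self, dot3_cross3_mul_dot3_cross3, hxy]
        field_simp
        ring

end VectorAlgebra

section Calculus

variable {p : ℝ × ℝ}

lemma DifferentiableAt.dot3 {f g : ℝ × ℝ → Fin 3 → ℝ} (hf : DifferentiableAt ℝ f p)
    (hg : DifferentiableAt ℝ g p) : DifferentiableAt ℝ (fun q => dot3 (f q) (g q)) p := by
  have hfi := differentiableAt_pi.1 hf
  have hgi := differentiableAt_pi.1 hg
  unfold _root_.dot3
  fun_prop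

lemma ContDiffAt.len3 {n : WithTop ℕ∞} {f : ℝ × ℝ → Fin 3 → ℝ} (hf : ContDiffAt ℝ n f p)
    (h0 : f p ≠ 0) : ContDiffAt ℝ n (fun q => len3 (f q)) p := by
  have hfi := contDiffAt_pi.1 hf
  refine ContDiffAt.sqrt ?_ (dot3_self_ne_zero h0)
  unfold dot3
  fun_prop

lemma fderiv_dot3_apply {f g : ℝ × ℝ → Fin 3 → ℝ} (hf : DifferentiableAt ℝ f p)
    (hg : DifferentiableAt ℝ g p) (w : ℝ × ℝ) :
    fderiv ℝ (fun q => dot3 (f q) (g q)) p w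
      = dot3 (fderiv ℝ f p w) (g p) + dot3 (f p) (fderiv ℝ g p w) := by
  have hfi := differentiableAt_pi.1 hf
  have hgi := differentiableAt_pi.1 hg
  unfold dot3
  rw [fderiv_fun_add (by fun_prop) (by fun_prop), fderiv_fun_add (by fun_prop) (by fun_prop)]
  simp [fderiv_fun_mul (hfi _) (hgi _), fderiv_apply hf, fderiv_apply hg]
  ring

lemma dot3_fderiv_apply_self {f : ℝ × ℝ → Fin 3 → ℝ} (hf : DifferentiableAt ℝ f p)
    (h0 : f p ≠ 0) (w : ℝ × ℝ) :
    dot3 (fderiv ℝ f p w) (f p) = len3 (f p) * fderiv ℝ (fun q => len3 (f q)) p w := by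
  have hlen := len3_ne_zero h0
  unfold len3 at hlen ⊢
  rw [fderiv_sqrt (hf.dot3 hf) (dot3_self_ne_zero h0)]
  simp only [smul_apply, smul_eq_mul, fderiv_dot3_apply hf hf, dot3_comm (f p)]
  field_simp
  ring

lemma dot3_du_self {f : ℝ × ℝ → Fin 3 → ℝ} (hf : DifferentiableAt ℝ f p) (h0 : f p ≠ 0) :
    dot3 (du f p) (f p) = len3 (f p) * du (fun q => len3 (f q)) p :=
  dot3_fderiv_apply_self hf h0 (1, 0)

lemma dot3_dv_self {f : ℝ × ℝ → Fin 3 → ℝ} (hf : DifferentiableAt ℝ f p) (h0 : f p ≠ 0) :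
    dot3 (dv f p) (f p) = len3 (f p) * dv (fun q => len3 (f q)) p :=
  dot3_fderiv_apply_self hf h0 (0, 1)

lemma fderiv_mul_apply {f g : ℝ × ℝ → ℝ} (hf : DifferentiableAt ℝ f p)
    (hg : DifferentiableAt ℝ g p) (w : ℝ × ℝ) :
    fderiv ℝ (fun q => f q * g q) p w = fderiv ℝ f p w * g p + f p * fderiv ℝ g p w := by
  simp [fderiv_fun_mul hf hg]
  ring

lemma fderiv_div_apply {f g : ℝ × ℝ → ℝ} (hf : DifferentiableAt ℝ f p)
    (hg : DifferentiableAt ℝ g p) (h0 : g p ≠ 0) (w : ℝ × ℝ) :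
    fderiv ℝ (fun q => f q / g q) p w
      = (fderiv ℝ f p w * g p - f p * fderiv ℝ g p w) / g p ^ 2 := by
  have hinv : HasFDerivAt (fun q => (g q)⁻¹) _ p :=
    (hasDerivAt_inv h0).comp_hasFDerivAt p hg.hasFDerivAt
  simp only [div_eq_mul_inv]
  rw [fderiv_mul_apply hf hinv.differentiableAt, hinv.fderiv]
  simp
  field_simp
  ring

lemma du_div {f g : ℝ × ℝ → ℝ} (hf : DifferentiableAt ℝ f p) (hg : DifferentiableAt ℝ g p)
    (h0 : g p ≠ 0) : du (fun q => f q / g q) p = (du f p * g p - f p * du g p) / g p ^ 2 :=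
  fderiv_div_apply hf hg h0 (1, 0)

lemma dv_div {f g : ℝ × ℝ → ℝ} (hf : DifferentiableAt ℝ f p) (hg : DifferentiableAt ℝ g p)
    (h0 : g p ≠ 0) : dv (fun q => f q / g q) p = (dv f p * g p - f p * dv g p) / g p ^ 2 :=
  fderiv_div_apply hf hg h0 (0, 1)

lemma dot3_fderiv_add_dot3_fderiv_eq_zero {f g : ℝ × ℝ → Fin 3 → ℝ}
    (hf : DifferentiableAt ℝ f p) (hg : DifferentiableAt ℝ g p)
    (horth : ∀ᶠ q in 𝓝 p, dot3 (f q) (g q) = 0) (w : ℝ × ℝ) :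
    dot3 (fderiv ℝ f p w) (g p) + dot3 (f p) (fderiv ℝ g p w) = 0 := by
  have hzero : (fun q => dot3 (f q) (g q)) =ᶠ[𝓝 p] fun _ => 0 := horth
  rw [← fderiv_dot3_apply hf hg, hzero.fderiv_eq, fderiv_const_apply, zero_apply]

variable {E : Type*} [NormedAddCommGroup E] [NormedSpace ℝ E] {f g : ℝ × ℝ → E}

lemma ContDiffAt.du {m n : WithTop ℕ∞} (hf : ContDiffAt ℝ n f p) (h : m + 1 ≤ n) :
    ContDiffAt ℝ m (du f) p :=
  (hf.fderiv_right h).clm_apply contDiffAt_const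

lemma ContDiffAt.dv {m n : WithTop ℕ∞} (hf : ContDiffAt ℝ n f p) (h : m + 1 ≤ n) :
    ContDiffAt ℝ m (dv f) p :=
  (hf.fderiv_right h).clm_apply contDiffAt_const

lemma ContDiffAt.differentiableAt_du (hf : ContDiffAt ℝ 2 f p) :
    DifferentiableAt ℝ (_root_.du f) p :=
  (hf.du (m := 1) (by norm_num)).differentiableAt one_ne_zero

lemma ContDiffAt.differentiableAt_dv (hf : ContDiffAt ℝ 2 f p) :
    DifferentiableAt ℝ (_root_.dv f) p :=
  (hf.dv (m := 1) (by norm_num)).differentiableAt one_ne_zero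

lemma Filter.EventuallyEq.du_eq (h : f =ᶠ[𝓝 p] g) : du f p = du g p := by
  rw [du, h.fderiv_eq, du]

lemma Filter.EventuallyEq.dv_eq (h : f =ᶠ[𝓝 p] g) : dv f p = dv g p := by
  rw [dv, h.fderiv_eq, dv]

lemma du_dv_eq_dv_du (hf : ContDiffAt ℝ 2 f p) : du (dv f) p = dv (du f) p := by
  have hd : DifferentiableAt ℝ (fderiv ℝ f) p :=
    (hf.fderiv_right (m := 1) (by norm_num)).differentiableAt (by norm_num)
  have hsymm := hf.isSymmSndFDerivAt (by simp [minSmoothness_of_isRCLikeNormedField]) (1, 0) (0, 1)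
  unfold du dv
  rw [fderiv_clm_apply hd (differentiableAt_const _),
    fderiv_clm_apply hd (differentiableAt_const _)]
  simpa using hsymm

end Calculus

section OrthogonalCoordinates

variable {r : ℝ × ℝ → Fin 3 → ℝ} {p : ℝ × ℝ}

lemma dot3_du_du_dv_eq (hr : ContDiffAt ℝ 2 r p) (hu : du r p ≠ 0)
    (horth : ∀ᶠ q in 𝓝 p, dot3 (du r q) (dv r q) = 0) :
    dot3 (du (du r) p) (dv r p) = -(len3 (du r p) * dv (fun q => len3 (du r q)) p) := by
  have hru := hr.differentiableAt_du
  have hrv := hr.differentiableAt_dv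
  have hF : dot3 (du (du r) p) (dv r p) + dot3 (du r p) (du (dv r) p) = 0 :=
    dot3_fderiv_add_dot3_fderiv_eq_zero hru hrv horth (1, 0)
  have hE := dot3_dv_self hru hu
  rw [du_dv_eq_dv_du hr, dot3_comm (du r p)] at hF
  linarith

lemma dot3_dv_du_dv_eq (hr : ContDiffAt ℝ 2 r p) (hv : dv r p ≠ 0) :
    dot3 (dv (du r) p) (dv r p) = len3 (dv r p) * du (fun q => len3 (dv r q)) p := by
  rw [← du_dv_eq_dv_du hr]
  exact dot3_du_self hr.differentiableAt_dv hv

lemma dot3_dv_dv_du_eq (hr : ContDiffAt ℝ 2 r p) (hv : dv r p ≠ 0)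
    (horth : ∀ᶠ q in 𝓝 p, dot3 (du r q) (dv r q) = 0) :
    dot3 (dv (dv r) p) (du r p) = -(len3 (dv r p) * du (fun q => len3 (dv r q)) p) := by
  have hru := hr.differentiableAt_du
  have hrv := hr.differentiableAt_dv
  have hF : dot3 (dv (du r) p) (dv r p) + dot3 (du r p) (dv (dv r) p) = 0 :=
    dot3_fderiv_add_dot3_fderiv_eq_zero hru hrv horth (0, 1)
  rw [dot3_dv_du_dv_eq hr hv, dot3_comm (du r p)] at hF
  linarith

lemma dot3_du_du_dv_dv_sub_dot3_dv_du_self (hr : ContDiffAt ℝ 3 r p)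
    (hu : ∀ᶠ q in 𝓝 p, du r q ≠ 0) (hv : ∀ᶠ q in 𝓝 p, dv r q ≠ 0)
    (horth : ∀ᶠ q in 𝓝 p, dot3 (du r q) (dv r q) = 0) :
    dot3 (du (du r) p) (dv (dv r) p) - dot3 (dv (du r) p) (dv (du r) p) =
      -(dv (fun q => len3 (du r q)) p * dv (fun q => len3 (du r q)) p
          + len3 (du r p) * dv (dv (fun q => len3 (du r q))) p)
      - (du (fun q => len3 (dv r q)) p * du (fun q => len3 (dv r q)) p
          + len3 (dv r p) * du (du (fun q => len3 (dv r q))) p) := by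
  set a := fun q => len3 (du r q)
  set b := fun q => len3 (dv r q)
  have hr2 : ∀ᶠ q in 𝓝 p, ContDiffAt ℝ 2 r q :=
    (hr.eventually (by simp)).mono fun q hq => hq.of_le (by norm_num)
  have hruu : (fun q => dot3 (du (du r) q) (dv r q)) =ᶠ[𝓝 p] fun q => -(a q * dv a q) := by
    filter_upwards [hr2, hu, horth.eventually_nhds] with q hq hqu hqorth
    exact dot3_du_du_dv_eq hq hqu hqorth
  have hruv : (fun q => dot3 (dv (du r) q) (dv r q)) =ᶠ[𝓝 p] fun q => b q * du b q := by
    filter_upwards [hr2, hv] with q hq hqv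
    exact dot3_dv_du_dv_eq hq hqv
  have hr2p : ContDiffAt ℝ 2 r p := hr.of_le (by norm_num)
  have hru : ContDiffAt ℝ 2 (du r) p := hr.du (by norm_num)
  have hrv : ContDiffAt ℝ 2 (dv r) p := hr.dv (by norm_num)
  have ha : ContDiffAt ℝ 2 a p := hru.len3 hu.self_of_nhds
  have hb : ContDiffAt ℝ 2 b p := hrv.len3 hv.self_of_nhds
  have hdv_ruu_rv : dv (fun q => dot3 (du (du r) q) (dv r q)) p =
      dot3 (dv (du (du r)) p) (dv r p) + dot3 (du (du r) p) (dv (dv r) p) :=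
    fderiv_dot3_apply hru.differentiableAt_du hr2p.differentiableAt_dv (0, 1)
  have hdu_ruv_rv : du (fun q => dot3 (dv (du r) q) (dv r q)) p =
      dot3 (du (dv (du r)) p) (dv r p) + dot3 (dv (du r) p) (du (dv r) p) :=
    fderiv_dot3_apply hru.differentiableAt_dv hr2p.differentiableAt_dv (1, 0)
  have hdv_a : dv (fun q => -(a q * dv a q)) p = -(dv a p * dv a p + a p * dv (dv a) p) := by
    rw [dv, fderiv_fun_neg, neg_apply,
      fderiv_mul_apply (ha.differentiableAt two_ne_zero) ha.differentiableAt_dv]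
    rfl
  have hdu_b : du (fun q => b q * du b q) p = du b p * du b p + b p * du (du b) p :=
    fderiv_mul_apply (hb.differentiableAt two_ne_zero) hb.differentiableAt_du (1, 0)
  rw [hruu.dv_eq, hdv_a] at hdv_ruu_rv
  rw [hruv.du_eq, hdu_b, du_dv_eq_dv_du hru, du_dv_eq_dv_du hr2p] at hdu_ruv_rv
  linarith

lemma gaussK_eq_of_dot3_eq_zero (hu : du r p ≠ 0) (hv : dv r p ≠ 0)
    (horth : dot3 (du r p) (dv r p) = 0) :
    gaussK r p =
      (dot3 (du (du r) p) (dv (dv r) p) - dot3 (dv (du r) p) (dv (du r) p)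
        - dot3 (du (du r) p) (du r p) * dot3 (dv (dv r) p) (du r p) / len3 (du r p) ^ 2
        - dot3 (du (du r) p) (dv r p) * dot3 (dv (dv r) p) (dv r p) / len3 (dv r p) ^ 2
        + dot3 (dv (du r) p) (du r p) ^ 2 / len3 (du r p) ^ 2
        + dot3 (dv (du r) p) (dv r p) ^ 2 / len3 (dv r p) ^ 2)
      / (len3 (du r p) ^ 2 * len3 (dv r p) ^ 2) := by
  unfold gaussK IIcoef₁ IIcoef₂ IIcoef₃ Icoef₁ Icoef₂ Icoef₃ unitNormal
  rw [sq (dot3 (dv (du r) p) _), dot3_unitCross_mul_dot3_unitCross horth hu hv,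
    dot3_unitCross_mul_dot3_unitCross horth hu hv, horth, ← len3_mul_self (du r p),
    ← len3_mul_self (dv r p)]
  ring

end OrthogonalCoordinates

/-- **Metric curvature formula in orthogonal coordinates** (Appendix A):
for a `C³` immersion with orthogonal coordinates, writing `a = |r_u|`, `b = |r_v|`,
the Gaussian curvature is
`K = −(1/(ab)) [ ∂_u((∂_u b)/a) + ∂_v((∂_v a)/b) ]`. -/
theorem metric_curvature_formula
    (Ω : Set (ℝ × ℝ)) (hΩ : IsOpen Ω)
    (r : ℝ × ℝ → Fin 3 → ℝ)
    (hr : ContDiffOn ℝ 3 r Ω)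
    (himm : ∀ p ∈ Ω, cross3 (du r p) (dv r p) ≠ 0)
    (horth : ∀ p ∈ Ω, dot3 (du r p) (dv r p) = 0) :
    ∀ p ∈ Ω,
      gaussK r p =
        -(1 / (len3 (du r p) * len3 (dv r p))) *
          (du (fun q => du (fun q' => len3 (dv r q')) q / len3 (du r q)) p +
           dv (fun q => dv (fun q' => len3 (du r q')) q / len3 (dv r q)) p) := by
  intro p hp
  have hΩp : Ω ∈ 𝓝 p := hΩ.mem_nhds hp
  have hu : ∀ᶠ q in 𝓝 p, du r q ≠ 0 :=
    mem_of_superset hΩp fun q hq => ne_zero_left_of_cross3_ne_zero (himm q hq)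
  have hv : ∀ᶠ q in 𝓝 p, dv r q ≠ 0 :=
    mem_of_superset hΩp fun q hq => ne_zero_right_of_cross3_ne_zero (himm q hq)
  have horth_near : ∀ᶠ q in 𝓝 p, dot3 (du r q) (dv r q) = 0 := mem_of_superset hΩp horth
  have hu₀ := hu.self_of_nhds
  have hv₀ := hv.self_of_nhds
  have hr3 : ContDiffAt ℝ 3 r p := hr.contDiffAt hΩp
  have hr2 : ContDiffAt ℝ 2 r p := hr3.of_le (by norm_num)
  have ha := (hr3.du (m := 2) (by norm_num)).len3 hu₀
  have hb := (hr3.dv (m := 2) (by norm_num)).len3 hv₀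
  have hA := len3_ne_zero hu₀
  have hB := len3_ne_zero hv₀
  rw [gaussK_eq_of_dot3_eq_zero hu₀ hv₀ horth_near.self_of_nhds,
    dot3_du_du_dv_dv_sub_dot3_dv_du_self hr3 hu hv horth_near,
    dot3_du_du_dv_eq hr2 hu₀ horth_near,
    dot3_dv_dv_du_eq hr2 hv₀ horth_near,
    dot3_dv_du_dv_eq hr2 hv₀,
    dot3_du_self hr2.differentiableAt_du hu₀,
    dot3_dv_self hr2.differentiableAt_du hu₀,
    dot3_dv_self hr2.differentiableAt_dv hv₀,
    du_div hb.differentiableAt_du (ha.differentiableAt two_ne_zero) hA,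
    dv_div ha.differentiableAt_dv (hb.differentiableAt two_ne_zero) hB]
  field_simp
  ring
end
end

section
/- Let f : ℝ³ → ℝ³ be differentiable on an open neighborhood of the unit sphere S² = {x ∈ ℝ³ : |x| = 1}, and suppose: (a) |f(x)| = 1 for every x ∈ S²; (b) for every x ∈ S² and every v ∈ ℝ³ with v·x = 0, |Df(x)v| = |v| (the differential maps each tangent plane isometrically); (c) for every x ∈ S² and every v, w ∈ ℝ³ with v·x = w·x = 0, ⟨ Df(x)v × Df(x)w , f(x) ⟩ = ⟨ v × w , x ⟩ (the deformation preserves orientation). Then there exists a single rotation Q ∈ SO(3) such that f(x) = Q x for every x ∈ S². -/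
open Matrix

noncomputable section

/-!
The positively homogeneous extension `y ↦ ‖y‖ • g (‖y‖⁻¹ • y)` of a sphere map `g` whose
differential is isometric on tangent planes has an isometric differential at every `y ≠ 0`.
The mean value inequality along the chord `[a, b]`, which misses `0` unless `b = -a`, then
gives `‖g b - g a‖ ≤ ‖b - a‖`, that is `⟪a, b⟫ ≤ ⟪g a, g b⟫`.

At a maximiser `x` of `⟪p, g ·⟫` on the sphere, `p` is orthogonal to the image of the tangent plane
at `x`, which by a dimension count is the whole tangent plane at `g x`; so `p = ± g x`, and
`p = -g x` would make `g` constant. Hence `g` is onto, hence odd (a preimage `z` of `-g x` has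
`⟪z, x⟫ ≤ -1`), and the inequality applied to `(a, -b)` reverses itself: `g` preserves inner
products, so it is the restriction of a linear isometry `L`. Then `Dg = L` on tangent planes, and
orientation preservation at a single point forces `det L = 1`.
-/

open Metric Set Module Submodule RealInnerProductSpace WithLp

section Sphere

variable {E F : Type*} [NormedAddCommGroup E] [InnerProductSpace ℝ E]
  [NormedAddCommGroup F] [InnerProductSpace ℝ F]

theorem norm_cos_smul_add_sin_smul {x u : E} (hx : ‖x‖ = 1) (hu : ‖u‖ = 1) (hxu : ⟪x, u⟫ = 0)
    (t : ℝ) : ‖Real.cos t • x + Real.sin t • u‖ = 1 := by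
  have h := norm_add_sq_eq_norm_sq_add_norm_sq_real
    (x := Real.cos t • x) (y := Real.sin t • u) (by simp [real_inner_smul_left,
      real_inner_smul_right, hxu])
  rw [norm_smul, norm_smul, hx, hu, Real.norm_eq_abs, Real.norm_eq_abs, mul_one, mul_one,
    abs_mul_abs_self, abs_mul_abs_self] at h
  nlinarith [norm_nonneg (Real.cos t • x + Real.sin t • u), Real.cos_sq_add_sin_sq t]

theorem exists_hasDerivAt_mem_sphere {x v : E} (hx : x ∈ sphere (0 : E) 1)
    (hv : v ∈ (ℝ ∙ x)ᗮ) :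
    ∃ γ : ℝ → E, γ 0 = x ∧ HasDerivAt γ v 0 ∧ ∀ t, γ t ∈ sphere (0 : E) 1 := by
  rcases eq_or_ne v 0 with rfl | hv0
  · exact ⟨fun _ => x, rfl, hasDerivAt_const 0 x, fun _ => hx⟩
  rw [mem_sphere_zero_iff_norm] at hx
  rw [mem_orthogonal_singleton_iff_inner_right] at hv
  set u := ‖v‖⁻¹ • v
  have hu : ‖u‖ = 1 := norm_smul_inv_norm hv0
  have hxu : ⟪x, u⟫ = 0 := by rw [real_inner_smul_right, hv, mul_zero]
  have hcircle : HasDerivAt (fun t => Real.cos t • x + Real.sin t • u) u 0 := by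
    simpa using
      ((Real.hasDerivAt_cos 0).smul_const x).fun_add ((Real.hasDerivAt_sin 0).smul_const u)
  refine ⟨fun t => Real.cos (‖v‖ * t) • x + Real.sin (‖v‖ * t) • u, by simp, ?_,
    fun t => mem_sphere_zero_iff_norm.2 (norm_cos_smul_add_sin_smul hx hu hxu _)⟩
  have := HasDerivAt.scomp (0 : ℝ) (by simpa using hcircle) ((hasDerivAt_id (0 : ℝ)).const_mul ‖v‖)
  simpa [u, Function.comp_def, smul_smul, norm_ne_zero_iff.2 hv0] using this

theorem IsMaxOn.hasFDerivAt_apply_orthogonal_eq_zero {φ : E → ℝ} {φ' : E →L[ℝ] ℝ} {x v : E}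
    (hmax : IsMaxOn φ (sphere 0 1) x) (hφ : HasFDerivAt φ φ' x) (hx : x ∈ sphere (0 : E) 1)
    (hv : v ∈ (ℝ ∙ x)ᗮ) : φ' v = 0 := by
  obtain ⟨γ, rfl, hγ, hγS⟩ := exists_hasDerivAt_mem_sphere hx hv
  have hloc : IsLocalMax (φ ∘ γ) 0 := Filter.Eventually.of_forall fun t => hmax (hγS t)
  exact hloc.hasDerivAt_eq_zero (hφ.comp_hasDerivAt 0 hγ)

theorem HasFDerivAt.apply_orthogonal_eq_zero_of_eqOn_sphere {g : E → F} {g' : E →L[ℝ] F} {c : F}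
    {x v : E} (hg : HasFDerivAt g g' x) (hc : EqOn g (fun _ => c) (sphere 0 1))
    (hx : x ∈ sphere (0 : E) 1) (hv : v ∈ (ℝ ∙ x)ᗮ) : g' v = 0 := by
  obtain ⟨γ, rfl, hγ, hγS⟩ := exists_hasDerivAt_mem_sphere hx hv
  have hconst : g ∘ γ = fun _ => c := funext fun t => hc (hγS t)
  have := hg.comp_hasDerivAt 0 hγ
  rw [hconst] at this
  exact this.unique (hasDerivAt_const 0 c)

theorem fderiv_apply_eq_of_eqOn_sphere {g : E → F} {L : E →L[ℝ] F} {x v : E}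
    (hg : DifferentiableAt ℝ g x) (hL : EqOn g L (sphere 0 1)) (hx : x ∈ sphere (0 : E) 1)
    (hv : v ∈ (ℝ ∙ x)ᗮ) : fderiv ℝ g x v = L v :=
  sub_eq_zero.1 <| (hg.hasFDerivAt.sub L.hasFDerivAt).apply_orthogonal_eq_zero_of_eqOn_sphere
    (c := 0) (fun _ hy => sub_eq_zero.2 (hL hy)) hx hv

theorem hasFDerivAt_norm {z : E} (hz : z ≠ 0) :
    HasFDerivAt (‖·‖) (‖z‖⁻¹ • innerSL ℝ z) z := by
  have h := (hasStrictFDerivAt_norm_sq z).hasFDerivAt.sqrt (by positivity)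
  simp only [Real.sqrt_sq (norm_nonneg _)] at h
  convert h using 1
  ext v
  simp only [_root_.smul_apply, coe_innerSL_apply, smul_eq_mul, one_div, _root_.mul_inv_rev,
    nsmul_eq_mul, Nat.cast_ofNat]
  field_simp

def homogeneousExtension (g : E → F) (y : E) : F := ‖y‖ • g (‖y‖⁻¹ • y)

theorem homogeneousExtension_of_mem_sphere (g : E → F) {x : E} (hx : x ∈ sphere (0 : E) 1) :
    homogeneousExtension g x = g x := by
  rw [mem_sphere_zero_iff_norm] at hx
  simp [homogeneousExtension, hx]

theorem hasFDerivAt_homogeneousExtension {g : E → F} {z : E} (hz : z ≠ 0)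
    (hg : DifferentiableAt ℝ g (‖z‖⁻¹ • z)) :
    ∃ T : E →L[ℝ] F, HasFDerivAt (homogeneousExtension g) T z ∧
      ∀ v, T v = ⟪‖z‖⁻¹ • z, v⟫ • g (‖z‖⁻¹ • z)
        + fderiv ℝ g (‖z‖⁻¹ • z) (v - ⟪‖z‖⁻¹ • z, v⟫ • (‖z‖⁻¹ • z)) := by
  have hz' : ‖z‖ ≠ 0 := norm_ne_zero_iff.2 hz
  have hnorm := hasFDerivAt_norm hz
  have hnormalize : HasFDerivAt (fun y : E => ‖y‖⁻¹ • y) _ z :=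
    ((hasDerivAt_inv hz').comp_hasFDerivAt z hnorm).fun_smul (hasFDerivAt_id z)
  refine ⟨_, hnorm.fun_smul
    (HasFDerivAt.comp (f := fun y : E => ‖y‖⁻¹ • y) z hg.hasFDerivAt hnormalize), fun v => ?_⟩
  simp only [Function.comp_apply, neg_smul, ContinuousLinearMap.comp_add,
    ContinuousLinearMap.comp_smulₛₗ, map_inv₀, Real.ringHom_apply, ContinuousLinearMap.comp_id,
    smul_add, _root_.add_apply, _root_.smul_apply, ContinuousLinearMap.comp_apply,
    ContinuousLinearMap.smulRight_apply, _root_.neg_apply, coe_innerSL_apply, smul_eq_mul, map_neg,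
    map_smul, smul_neg, real_inner_smul_left, map_sub]
  match_scalars <;> field_simp

theorem zero_notMem_segment_of_norm_eq {a b : E} (hab : ‖a‖ = ‖b‖) (hne : b ≠ -a) :
    (0 : E) ∉ segment ℝ a b := by
  rw [mem_segment_iff_sameRay]
  intro h
  exact hne (by simpa [eq_comm] using h.eq_of_norm_eq (by simpa using hab))

theorem finrank_orthogonal_span_singleton_add_one [FiniteDimensional ℝ E] {x : E} (hx : x ≠ 0) :
    finrank ℝ (ℝ ∙ x)ᗮ + 1 = finrank ℝ E := by
  rw [← finrank_add_finrank_orthogonal (ℝ ∙ x), finrank_span_singleton hx, add_comm]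

theorem exists_linearIsometryEquiv_eqOn_sphere [FiniteDimensional ℝ E] {g : E → E}
    (hg : ∀ a ∈ sphere (0 : E) 1, ∀ b ∈ sphere (0 : E) 1, ⟪g a, g b⟫ = ⟪a, b⟫) :
    ∃ L : E ≃ₗᵢ[ℝ] E, EqOn g L (sphere 0 1) := by
  set b := stdOrthonormalBasis ℝ E
  have hb : ∀ i, b i ∈ sphere (0 : E) 1 := fun i => mem_sphere_zero_iff_norm.2 (b.orthonormal.1 i)
  have hu : Orthonormal ℝ (g ∘ b) := orthonormal_iff_ite.2 fun i j =>
    (hg _ (hb i) _ (hb j)).trans (orthonormal_iff_ite.1 b.orthonormal i j)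
  set b' := OrthonormalBasis.mk hu (hu.linearIndependent.span_eq_top_of_card_eq_finrank'
    (by simp)).ge
  set L := b.equiv b' (Equiv.refl _)
  refine ⟨L, fun y hy => InnerProductSpace.ext_inner_left_basis b'.toBasis fun i => ?_⟩
  calc ⟪b' i, g y⟫ = ⟪b i, y⟫ := by simpa [b'] using hg _ (hb i) _ hy
    _ = ⟪b' i, L y⟫ := by rw [← L.inner_map_map, OrthonormalBasis.equiv_apply_basis]; rfl

structure IsSphereIsometricDeformation (g : E → F) : Prop where
  differentiableAt : ∀ x ∈ sphere (0 : E) 1, DifferentiableAt ℝ g x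
  mapsTo : MapsTo g (sphere 0 1) (sphere 0 1)
  norm_fderiv_apply : ∀ x ∈ sphere (0 : E) 1, ∀ v ∈ (ℝ ∙ x)ᗮ, ‖fderiv ℝ g x v‖ = ‖v‖

namespace IsSphereIsometricDeformation

variable {g : E → F} (hg : IsSphereIsometricDeformation g)
include hg

theorem norm_apply {x : E} (hx : x ∈ sphere (0 : E) 1) : ‖g x‖ = 1 :=
  mem_sphere_zero_iff_norm.1 (hg.mapsTo hx)

theorem fderiv_apply_mem_orthogonal {x v : E} (hx : x ∈ sphere (0 : E) 1) (hv : v ∈ (ℝ ∙ x)ᗮ) :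
    fderiv ℝ g x v ∈ (ℝ ∙ g x)ᗮ := by
  have h := ((hg.differentiableAt x hx).hasFDerivAt.norm_sq).apply_orthogonal_eq_zero_of_eqOn_sphere
    (c := 1) (fun y hy => by simp [hg.norm_apply hy]) hx hv
  rw [mem_orthogonal_singleton_iff_inner_right]
  simpa using h

theorem norm_inner_smul_add_fderiv_apply {x : E} (hx : x ∈ sphere (0 : E) 1) (v : E) :
    ‖⟪x, v⟫ • g x + fderiv ℝ g x (v - ⟪x, v⟫ • x)‖ = ‖v‖ := by
  have hx1 := mem_sphere_zero_iff_norm.1 hx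
  set w := v - ⟪x, v⟫ • x
  have hw : w ∈ (ℝ ∙ x)ᗮ := by
    rw [mem_orthogonal_singleton_iff_inner_right, inner_sub_right, real_inner_smul_right,
      real_inner_self_eq_norm_sq, hx1]
    ring
  have himage := norm_add_sq_eq_norm_sq_add_norm_sq_real (x := ⟪x, v⟫ • g x)
    (y := fderiv ℝ g x w) <| by
      rw [real_inner_smul_left, mem_orthogonal_singleton_iff_inner_right.1
        (hg.fderiv_apply_mem_orthogonal hx hw), mul_zero]
  have hsource := norm_add_sq_eq_norm_sq_add_norm_sq_real (x := ⟪x, v⟫ • x) (y := w) <| by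
    rw [real_inner_smul_left, mem_orthogonal_singleton_iff_inner_right.1 hw, mul_zero]
  rw [norm_smul, hg.norm_apply hx, hg.norm_fderiv_apply x hx w hw] at himage
  rw [norm_smul, hx1, show ⟪x, v⟫ • x + w = v by simp [w]] at hsource
  exact (mul_self_inj (norm_nonneg _) (norm_nonneg _)).1 (himage.trans hsource.symm)

theorem exists_hasFDerivAt_homogeneousExtension_norm_le {z : E} (hz : z ≠ 0) :
    ∃ T : E →L[ℝ] F, HasFDerivAt (homogeneousExtension g) T z ∧ ‖T‖ ≤ 1 := by
  have hx : ‖z‖⁻¹ • z ∈ sphere (0 : E) 1 := mem_sphere_zero_iff_norm.2 (norm_smul_inv_norm hz)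
  obtain ⟨T, hT, hTv⟩ := hasFDerivAt_homogeneousExtension hz (hg.differentiableAt _ hx)
  refine ⟨T, hT, T.opNorm_le_bound zero_le_one fun v => ?_⟩
  rw [one_mul, hTv, hg.norm_inner_smul_add_fderiv_apply hx]

theorem norm_apply_sub_apply_le {a b : E} (ha : a ∈ sphere (0 : E) 1) (hb : b ∈ sphere (0 : E) 1) :
    ‖g b - g a‖ ≤ ‖b - a‖ := by
  have ha1 := mem_sphere_zero_iff_norm.1 ha
  have hb1 := mem_sphere_zero_iff_norm.1 hb
  rcases eq_or_ne b (-a) with rfl | hne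
  · calc ‖g (-a) - g a‖ ≤ ‖g (-a)‖ + ‖g a‖ := norm_sub_le _ _
      _ = ‖-a - a‖ := by
        rw [hg.norm_apply hb, hg.norm_apply ha, show -a - a = (-2 : ℝ) • a by module, norm_smul,
          ha1]
        norm_num
  have hT : ∀ z ∈ segment ℝ a b, ∃ T : E →L[ℝ] F,
      HasFDerivAt (homogeneousExtension g) T z ∧ ‖T‖ ≤ 1 := fun z hz =>
    hg.exists_hasFDerivAt_homogeneousExtension_norm_le
      (ne_of_mem_of_not_mem hz (zero_notMem_segment_of_norm_eq (ha1.trans hb1.symm) hne))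
  choose! T hT hTle using hT
  have h := (convex_segment a b).norm_image_sub_le_of_norm_hasFDerivWithin_le
    (fun z hz => (hT z hz).hasFDerivWithinAt) hTle (left_mem_segment ℝ a b)
    (right_mem_segment ℝ a b)
  rwa [homogeneousExtension_of_mem_sphere g ha, homogeneousExtension_of_mem_sphere g hb,
    one_mul] at h

theorem inner_le_inner_apply {a b : E} (ha : a ∈ sphere (0 : E) 1) (hb : b ∈ sphere (0 : E) 1) :
    ⟪a, b⟫ ≤ ⟪g a, g b⟫ := by
  have h := pow_le_pow_left₀ (norm_nonneg _) (hg.norm_apply_sub_apply_le ha hb) 2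
  rw [norm_sub_sq_real, norm_sub_sq_real, hg.norm_apply ha, hg.norm_apply hb,
    mem_sphere_zero_iff_norm.1 ha, mem_sphere_zero_iff_norm.1 hb, real_inner_comm a,
    real_inner_comm (g a)] at h
  linarith

theorem not_eqOn_const [FiniteDimensional ℝ E] (hE : 1 < finrank ℝ E) (c : F) :
    ¬ EqOn g (fun _ => c) (sphere 0 1) := by
  intro hc
  have : Nontrivial E := nontrivial_of_finrank_pos (R := ℝ) (by omega)
  obtain ⟨x, hx⟩ := (NormedSpace.sphere_nonempty (E := E) (x := 0)).2 zero_le_one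
  have hx0 : x ≠ 0 := ne_zero_of_mem_unit_sphere ⟨x, hx⟩
  obtain ⟨v, hv, hv0⟩ := exists_mem_ne_zero_of_ne_bot fun h : (ℝ ∙ x)ᗮ = ⊥ => by
    have := finrank_orthogonal_span_singleton_add_one hx0
    rw [h, finrank_bot] at this
    omega
  have h0 := (hg.differentiableAt x hx).hasFDerivAt.apply_orthogonal_eq_zero_of_eqOn_sphere hc hx hv
  exact hv0 (norm_eq_zero.1 (by rw [← hg.norm_fderiv_apply x hx v hv, h0, norm_zero]))

end IsSphereIsometricDeformation

namespace IsSphereIsometricDeformation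

variable [FiniteDimensional ℝ E] {g : E → E} (hg : IsSphereIsometricDeformation g)
include hg

theorem map_fderiv_orthogonal {x : E} (hx : x ∈ sphere (0 : E) 1) :
    (ℝ ∙ x)ᗮ.map (fderiv ℝ g x : E →ₗ[ℝ] E) = (ℝ ∙ g x)ᗮ := by
  set f : (ℝ ∙ x)ᗮ →ₗ[ℝ] E := (fderiv ℝ g x : E →ₗ[ℝ] E) ∘ₗ (ℝ ∙ x)ᗮ.subtype
  have hf : Function.Injective f := (injective_iff_map_eq_zero f).2 fun v hv => by
    have h := hg.norm_fderiv_apply x hx v v.2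
    simp only [f, LinearMap.comp_apply, subtype_apply, ContinuousLinearMap.coe_coe] at hv
    rw [hv, norm_zero] at h
    exact Subtype.ext (norm_eq_zero.1 h.symm)
  have hrange : LinearMap.range f = (ℝ ∙ x)ᗮ.map (fderiv ℝ g x : E →ₗ[ℝ] E) := by
    rw [LinearMap.range_comp, range_subtype]
  rw [← hrange]
  refine eq_of_le_of_finrank_eq ?_ ?_
  · rintro _ ⟨v, rfl⟩
    exact hg.fderiv_apply_mem_orthogonal hx v.2
  · have hx0 := ne_zero_of_mem_unit_sphere ⟨x, hx⟩
    have hgx0 : g x ≠ 0 := ne_zero_of_mem_unit_sphere ⟨g x, hg.mapsTo hx⟩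
    have h1 := finrank_orthogonal_span_singleton_add_one hx0
    have h2 := finrank_orthogonal_span_singleton_add_one hgx0
    rw [LinearMap.finrank_range_of_inj hf]
    exact Nat.add_right_cancel (h1.trans h2.symm)

theorem mem_span_singleton_of_isMaxOn {x p : E} (hx : x ∈ sphere (0 : E) 1)
    (hmax : IsMaxOn (fun y => ⟪p, g y⟫) (sphere 0 1) x) : p ∈ ℝ ∙ g x := by
  rw [← orthogonal_orthogonal (ℝ ∙ g x), ← hg.map_fderiv_orthogonal hx, mem_orthogonal]
  rintro _ ⟨v, hv, rfl⟩
  rw [real_inner_comm]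
  exact hmax.hasFDerivAt_apply_orthogonal_eq_zero
    ((innerSL ℝ p).hasFDerivAt.comp x (hg.differentiableAt x hx).hasFDerivAt) hx hv

theorem surjOn (hE : 1 < finrank ℝ E) : SurjOn g (sphere 0 1) (sphere 0 1) := by
  intro p hp
  have hcont : ContinuousOn (fun y => ⟪p, g y⟫) (sphere 0 1) := fun y hy =>
    continuousWithinAt_const.inner (hg.differentiableAt y hy).continuousAt.continuousWithinAt
  have : Nontrivial E := nontrivial_of_finrank_pos (R := ℝ) (by omega)
  obtain ⟨x, hx, hmax⟩ := (isCompact_sphere (0 : E) 1).exists_isMaxOn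
    ((NormedSpace.sphere_nonempty (E := E) (x := 0)).2 zero_le_one) hcont
  obtain ⟨c, rfl⟩ := mem_span_singleton.1 (hg.mem_span_singleton_of_isMaxOn hx hmax)
  have hc : |c| = 1 := by
    simpa [norm_smul, hg.norm_apply hx] using mem_sphere_zero_iff_norm.1 hp
  rcases abs_eq (zero_le_one' ℝ) |>.1 hc with rfl | rfl
  · exact ⟨x, hx, (one_smul ℝ (g x)).symm⟩
  -- `p = -g x`: the maximum of `⟪p, g ·⟫` is `-1`, its least possible value, so `g ≡ g x`.
  refine absurd (fun y hy => ?_) (hg.not_eqOn_const hE (g x))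
  have hx1 := hg.norm_apply hx
  have hy1 := hg.norm_apply hy
  have hle : ⟪(-1 : ℝ) • g x, g y⟫ ≤ ⟪(-1 : ℝ) • g x, g x⟫ := isMaxOn_iff.1 hmax y hy
  rw [neg_one_smul, inner_neg_left, inner_neg_left, real_inner_self_eq_norm_sq, hx1] at hle
  have hxy : ⟪g x, g y⟫ = 1 :=
    le_antisymm ((real_inner_le_norm _ _).trans_eq (by rw [hx1, hy1, one_mul])) (by linarith)
  exact ((inner_eq_one_iff_of_norm_eq_one hx1 hy1).1 hxy).symm

theorem apply_neg (hE : 1 < finrank ℝ E) {x : E} (hx : x ∈ sphere (0 : E) 1) :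
    g (-x) = -g x := by
  have hx1 := mem_sphere_zero_iff_norm.1 hx
  obtain ⟨z, hz, hgz⟩ := hg.surjOn hE (show -g x ∈ sphere (0 : E) 1 by simpa using hg.mapsTo hx)
  have hle := hg.inner_le_inner_apply hz hx
  rw [hgz, inner_neg_left, real_inner_self_eq_norm_sq, hg.norm_apply hx] at hle
  have hzx : ⟪z, x⟫ = -1 :=
    le_antisymm (by linarith) ((neg_le_of_abs_le (abs_real_inner_le_norm z x)).trans_eq'
      (by rw [mem_sphere_zero_iff_norm.1 hz, hx1, one_mul]))
  rwa [← (inner_eq_neg_one_iff_of_norm_eq_one (mem_sphere_zero_iff_norm.1 hz) hx1).1 hzx]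

theorem inner_apply_apply (hE : 1 < finrank ℝ E) {a b : E} (ha : a ∈ sphere (0 : E) 1)
    (hb : b ∈ sphere (0 : E) 1) : ⟪g a, g b⟫ = ⟪a, b⟫ := by
  have hle := hg.inner_le_inner_apply ha (by simpa using hb : -b ∈ sphere (0 : E) 1)
  rw [hg.apply_neg hE hb, inner_neg_right, inner_neg_right] at hle
  exact le_antisymm (by linarith) (hg.inner_le_inner_apply ha hb)

theorem exists_linearIsometryEquiv (hE : 1 < finrank ℝ E) :
    ∃ L : E ≃ₗᵢ[ℝ] E, EqOn g L (sphere 0 1) :=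
  exists_linearIsometryEquiv_eqOn_sphere fun _ ha _ hb => hg.inner_apply_apply hE ha hb

end IsSphereIsometricDeformation

end Sphere

theorem fderiv_toLp_comp_ofLp {ι : Type*} [Fintype ι] (f : (ι → ℝ) → (ι → ℝ))
    (x v : EuclideanSpace ℝ ι) :
    fderiv ℝ (fun y => toLp 2 (f (ofLp y))) x v = toLp 2 (fderiv ℝ f (ofLp x) (ofLp v)) := by
  have h := (EuclideanSpace.equiv ι ℝ).symm.comp_fderiv (f := f ∘ EuclideanSpace.equiv ι ℝ) (x := x)
  rw [(EuclideanSpace.equiv ι ℝ).comp_right_fderiv] at h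
  exact congrArg (· v) h

theorem LinearMap.toMatrix_basisFun_mulVec {ι : Type*} [Fintype ι] [DecidableEq ι]
    (L : EuclideanSpace ℝ ι →ₗ[ℝ] EuclideanSpace ℝ ι) (x : ι → ℝ) :
    LinearMap.toMatrix (EuclideanSpace.basisFun ι ℝ).toBasis (EuclideanSpace.basisFun ι ℝ).toBasis L
      *ᵥ x = ofLp (L (toLp 2 x)) := by
  have hrepr (y : EuclideanSpace ℝ ι) : ⇑((EuclideanSpace.basisFun ι ℝ).toBasis.repr y) = ofLp y :=
    funext (EuclideanSpace.basisFun_repr ι ℝ y)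
  have h := LinearMap.toMatrix_mulVec_repr (EuclideanSpace.basisFun ι ℝ).toBasis
    (EuclideanSpace.basisFun ι ℝ).toBasis L (toLp 2 x)
  rwa [hrepr, hrepr, ofLp_toLp] at h

theorem dot3_ofLp (x y : EuclideanSpace ℝ (Fin 3)) : dot3 (ofLp x) (ofLp y) = ⟪x, y⟫ := by
  simp only [dot3, PiLp.inner_apply, RCLike.inner_apply, Real.ringHom_apply, Fin.sum_univ_three]
  ring

theorem len3_ofLp (x : EuclideanSpace ℝ (Fin 3)) : len3 (ofLp x) = ‖x‖ := by
  rw [len3, dot3_ofLp, norm_eq_sqrt_real_inner]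

theorem len3_eq_one_iff (x : Fin 3 → ℝ) :
    len3 x = 1 ↔ toLp 2 x ∈ sphere (0 : EuclideanSpace ℝ (Fin 3)) 1 := by
  rw [mem_sphere_zero_iff_norm, ← len3_ofLp, ofLp_toLp]

theorem dot3_eq_zero_iff (v x : Fin 3 → ℝ) : dot3 v x = 0 ↔ toLp 2 v ∈ (ℝ ∙ toLp 2 x)ᗮ := by
  rw [mem_orthogonal_singleton_iff_inner_right, real_inner_comm, ← dot3_ofLp, ofLp_toLp, ofLp_toLp]

theorem det_eq_dot3_cross3_mulVec (Q : Matrix (Fin 3) (Fin 3) ℝ) :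
    Q.det = dot3 (cross3 (Q *ᵥ Pi.single 0 1) (Q *ᵥ Pi.single 1 1)) (Q *ᵥ Pi.single 2 1) := by
  simp only [det_fin_three, dot3, cross3, mulVec_single, MulOpposite.op_one, Pi.smul_apply,
    col_apply, one_smul, cons_val_zero, cons_val_one, cons_val]
  ring

theorem LinearIsometryEquiv.transpose_toMatrix_mul_toMatrix {ι E : Type*} [Fintype ι]
    [DecidableEq ι] [NormedAddCommGroup E] [InnerProductSpace ℝ E] (L : E ≃ₗᵢ[ℝ] E)
    (b : OrthonormalBasis ι ℝ E) :
    (LinearMap.toMatrix b.toBasis b.toBasis L.toLinearMap)ᵀ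
      * LinearMap.toMatrix b.toBasis b.toBasis L.toLinearMap = 1 := by
  have h := L.toMatrix_mem_unitaryGroup b b
  rw [mem_unitaryGroup_iff'] at h
  simpa [star_eq_conjTranspose] using h

theorem isSphereIsometricDeformation_toLp_comp_ofLp {f : (Fin 3 → ℝ) → (Fin 3 → ℝ)}
    (hdiff : ∀ x, len3 x = 1 → DifferentiableAt ℝ f x)
    (hsphere : ∀ x, len3 x = 1 → len3 (f x) = 1)
    (hisom : ∀ x, len3 x = 1 → ∀ v, dot3 v x = 0 → len3 (fderiv ℝ f x v) = len3 v) :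
    IsSphereIsometricDeformation (fun y : EuclideanSpace ℝ (Fin 3) => toLp 2 (f (ofLp y))) where
  differentiableAt x hx :=
    (EuclideanSpace.equiv (Fin 3) ℝ).symm.differentiableAt.comp x
      ((hdiff _ ((len3_eq_one_iff _).2 hx)).comp x
        (EuclideanSpace.equiv (Fin 3) ℝ).differentiableAt)
  mapsTo x hx := (len3_eq_one_iff _).1 (hsphere _ ((len3_eq_one_iff _).2 hx))
  norm_fderiv_apply x hx v hv := by
    rw [fderiv_toLp_comp_ofLp, ← len3_ofLp, ← len3_ofLp, ofLp_toLp]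
    exact hisom _ ((len3_eq_one_iff _).2 hx) _ ((dot3_eq_zero_iff _ _).2 hv)

/-- **Isometries of the sphere are rigid rotations** (Proposition 6.2):
if `f` is differentiable on an open neighborhood of the unit sphere `S²`, maps `S²`
into `S²`, maps each tangent plane isometrically, and preserves orientation, then
`f` is the restriction to `S²` of a single rotation `Q ∈ SO(3)`. -/
theorem sphere_isometry_is_rotation
    (f : (Fin 3 → ℝ) → (Fin 3 → ℝ))
    (hdiff : ∃ U : Set (Fin 3 → ℝ), IsOpen U ∧ {x | len3 x = 1} ⊆ U ∧
      DifferentiableOn ℝ f U)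
    (hsphere : ∀ x, len3 x = 1 → len3 (f x) = 1)
    (hisom : ∀ x, len3 x = 1 → ∀ v, dot3 v x = 0 →
      len3 (fderiv ℝ f x v) = len3 v)
    (horient : ∀ x, len3 x = 1 → ∀ v w, dot3 v x = 0 → dot3 w x = 0 →
      dot3 (cross3 (fderiv ℝ f x v) (fderiv ℝ f x w)) (f x) = dot3 (cross3 v w) x) :
    ∃ Q : Matrix (Fin 3) (Fin 3) ℝ,
      Qᵀ * Q = 1 ∧ Q.det = 1 ∧ ∀ x, len3 x = 1 → f x = Q.mulVec x := by
  obtain ⟨U, hU, hSU, hfU⟩ := hdiff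
  have hg := isSphereIsometricDeformation_toLp_comp_ofLp
    (fun x hx => hfU.differentiableAt (hU.mem_nhds (hSU hx))) hsphere hisom
  obtain ⟨L, hL⟩ := hg.exists_linearIsometryEquiv (by simp)
  set b := EuclideanSpace.basisFun (Fin 3) ℝ
  set Q := LinearMap.toMatrix b.toBasis b.toBasis L.toLinearMap
  have hfQ (x : Fin 3 → ℝ) (hx : len3 x = 1) : f x = Q *ᵥ x := by
    rw [LinearMap.toMatrix_basisFun_mulVec]
    exact congrArg ofLp (hL ((len3_eq_one_iff x).1 hx))
  have hf'Q (x : Fin 3 → ℝ) (hx : len3 x = 1) (v : Fin 3 → ℝ) (hv : dot3 v x = 0) :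
      fderiv ℝ f x v = Q *ᵥ v := by
    rw [len3_eq_one_iff] at hx
    have h := fderiv_apply_eq_of_eqOn_sphere (L := (L : EuclideanSpace ℝ (Fin 3) →L[ℝ] _))
      (hg.differentiableAt _ hx) hL hx ((dot3_eq_zero_iff v x).1 hv)
    rw [fderiv_toLp_comp_ofLp] at h
    rw [LinearMap.toMatrix_basisFun_mulVec]
    exact congrArg ofLp h
  have he2 : len3 (Pi.single 2 1) = 1 := by simp [len3, dot3]
  refine ⟨Q, L.transpose_toMatrix_mul_toMatrix b, ?_, hfQ⟩
  rw [det_eq_dot3_cross3_mulVec, ← hf'Q _ he2 _ (by simp [dot3]), ← hf'Q _ he2 _ (by simp [dot3]),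
    ← hfQ _ he2, horient _ he2 _ _ (by simp [dot3]) (by simp [dot3])]
  simp [dot3, cross3]
end
end

section
/- Let ρ : ℝ → ℝ be a differentiable positive function, and define the parametrized surface of revolution X(θ,z) = (ρ(z)cos θ, ρ(z)sin θ, z) and the everted surface Y(θ,z) = (ρ(z)cos θ, ρ(z)sin θ, −z). For each (θ,z), set e₁(θ) = (−sin θ, cos θ, 0) (the unit tangent to the parallels), and let α(z) be determined by cos α = (ρ'(z)² − 1)/(1 + ρ'(z)²) and sin α = 2ρ'(z)/(1 + ρ'(z)²). Then, with R = R(e₁(θ), α(z)) the Rodrigues rotation about e₁(θ) by angle α(z), one has ∂_θ Y(θ,z) = R (∂_θ X(θ,z)) and ∂_z Y(θ,z) = R (∂_z X(θ,z)) for every (θ,z). -/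
/-!
`∂_θ Y = ∂_θ X = ρ e₁` lies on the rotation axis, so the rotation fixes it. With
`u = (cos θ, sin θ, 0)` and `e₃ = (0, 0, 1)`, the vectors `∂_z X = ρ' u + e₃` and
`∂_z Y = ρ' u - e₃` are orthogonal to `e₁`, and `e₁ × (ρ' u + e₃) = u - ρ' e₃`; so on `e₁^⊥`
the Rodrigues rotation acts as the plane rotation by `α` in the basis `(u, e₃)`, and the
half-angle values of `cos α`, `sin α` are exactly those for which it maps `(ρ', 1)` to `(ρ', -1)`.
-/

noncomputable section

/-- Rodrigues rotation about the unit vector `e` by the angle `a`. -/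
def rodrigues (e : Fin 3 → ℝ) (a : ℝ) (x : Fin 3 → ℝ) : Fin 3 → ℝ :=
  Real.cos a • x + Real.sin a • cross3 e x + ((1 - Real.cos a) * dot3 e x) • e

open Real

lemma rodrigues_smul_self {e : Fin 3 → ℝ} (he : dot3 e e = 1) (a c : ℝ) :
    rodrigues e a (c • e) = c • e := by
  have hdot : dot3 e (c • e) = c := by
    simp only [dot3, Pi.smul_apply, smul_eq_mul] at he ⊢; linear_combination c * he
  have hcross : cross3 e (c • e) = 0 := by
    ext i
    fin_cases i <;>
      simp only [cross3, Pi.smul_apply, smul_eq_mul, Pi.zero_apply, Matrix.cons_val_zero,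
        Matrix.cons_val_one, Matrix.cons_val, Fin.reduceFinMk, Fin.mk_one, Fin.zero_eta] <;>
      ring
  rw [rodrigues, hdot, hcross, smul_zero, add_zero, ← sub_eq_zero]
  module

lemma rodrigues_of_dot3_eq_zero {e x : Fin 3 → ℝ} (h : dot3 e x = 0) (a : ℝ) :
    rodrigues e a x = cos a • x + sin a • cross3 e x := by
  simp [rodrigues, h]

lemma cos_mul_add_sin_and_cos_sub_sin_mul {r a : ℝ}
    (hcos : cos a = (r ^ 2 - 1) / (1 + r ^ 2)) (hsin : sin a = 2 * r / (1 + r ^ 2)) :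
    cos a * r + sin a = r ∧ cos a - sin a * r = -1 := by
  have hden : 1 + r ^ 2 ≠ 0 := by positivity
  rw [hcos, hsin]
  constructor <;> field_simp <;> ring

lemma rodrigues_meridian_tangent (θ r a : ℝ)
    (hcos : cos a = (r ^ 2 - 1) / (1 + r ^ 2)) (hsin : sin a = 2 * r / (1 + r ^ 2)) :
    rodrigues ![-sin θ, cos θ, 0] a ![r * cos θ, r * sin θ, 1]
      = ![r * cos θ, r * sin θ, -1] := by
  have hdot : dot3 ![-sin θ, cos θ, 0] ![r * cos θ, r * sin θ, 1] = 0 := by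
    simp only [dot3, Matrix.cons_val_zero, Matrix.cons_val_one, Matrix.cons_val]; ring
  have hcross :
      cross3 ![-sin θ, cos θ, 0] ![r * cos θ, r * sin θ, 1] = ![cos θ, sin θ, -r] := by
    ext i
    fin_cases i <;>
      simp only [cross3, Matrix.cons_val_zero, Matrix.cons_val_one, Matrix.cons_val,
        Fin.reduceFinMk, Fin.mk_one, Fin.zero_eta]
    · ring
    · ring
    · linear_combination -r * sin_sq_add_cos_sq θ
  obtain ⟨h₁, h₂⟩ := cos_mul_add_sin_and_cos_sub_sin_mul hcos hsin
  rw [rodrigues_of_dot3_eq_zero hdot, hcross]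
  ext i
  fin_cases i <;>
    simp only [Pi.add_apply, Pi.smul_apply, smul_eq_mul, Matrix.cons_val_zero,
      Matrix.cons_val_one, Matrix.cons_val, Fin.reduceFinMk, Fin.mk_one, Fin.zero_eta]
  · linear_combination cos θ * h₁
  · linear_combination sin θ * h₁
  · linear_combination h₂

lemma hasFDerivAt_vec3 {E : Type*} [NormedAddCommGroup E] [NormedSpace ℝ E]
    {f g h : E → ℝ} {f' g' h' : E →L[ℝ] ℝ} {x : E}
    (hf : HasFDerivAt f f' x) (hg : HasFDerivAt g g' x) (hh : HasFDerivAt h h' x) :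
    HasFDerivAt (fun y => ![f y, g y, h y]) (ContinuousLinearMap.pi ![f', g', h']) x := by
  have := (hasFDerivAt_pi (φ := ![f, g, h]) (φ' := ![f', g', h']) (x := x)).2
    (fun i => by fin_cases i <;> assumption)
  convert this using 1
  ext y i; fin_cases i <;> rfl

def surfaceOfRevolution (ρ h : ℝ → ℝ) (p : ℝ × ℝ) : Fin 3 → ℝ :=
  ![ρ p.2 * cos p.1, ρ p.2 * sin p.1, h p.2]

section

variable {ρ h : ℝ → ℝ} {θ z : ℝ}

open ContinuousLinearMap in
lemma hasFDerivAt_surfaceOfRevolution {r c : ℝ} (hρ : HasDerivAt ρ r z)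
    (hh : HasDerivAt h c z) :
    HasFDerivAt (surfaceOfRevolution ρ h)
      (pi ![ρ z • (-sin θ) • fst ℝ ℝ ℝ + cos θ • r • snd ℝ ℝ ℝ,
        ρ z • cos θ • fst ℝ ℝ ℝ + sin θ • r • snd ℝ ℝ ℝ, c • snd ℝ ℝ ℝ]) (θ, z) := by
  have hfst : HasFDerivAt Prod.fst (fst ℝ ℝ ℝ) (θ, z) := hasFDerivAt_fst
  have hsnd : HasFDerivAt Prod.snd (snd ℝ ℝ ℝ) (θ, z) := hasFDerivAt_snd
  have hρ₂ := hρ.comp_hasFDerivAt (θ, z) hsnd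
  have hcos := (hasDerivAt_cos θ).comp_hasFDerivAt (θ, z) hfst
  have hsin := (hasDerivAt_sin θ).comp_hasFDerivAt (θ, z) hfst
  exact hasFDerivAt_vec3 (hρ₂.mul hcos) (hρ₂.mul hsin) (hh.comp_hasFDerivAt (θ, z) hsnd)

lemma du_surfaceOfRevolution (hρ : DifferentiableAt ℝ ρ z) (hh : DifferentiableAt ℝ h z) :
    du (surfaceOfRevolution ρ h) (θ, z) = ρ z • ![-sin θ, cos θ, 0] := by
  rw [du, (hasFDerivAt_surfaceOfRevolution hρ.hasDerivAt hh.hasDerivAt).fderiv]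
  ext i; fin_cases i <;> simp

lemma dv_surfaceOfRevolution {r c : ℝ} (hρ : HasDerivAt ρ r z) (hh : HasDerivAt h c z) :
    dv (surfaceOfRevolution ρ h) (θ, z) = ![r * cos θ, r * sin θ, c] := by
  rw [dv, (hasFDerivAt_surfaceOfRevolution hρ hh).fderiv]
  ext i; fin_cases i <;> simp [mul_comm]

end

theorem eversion_pure_bending_general
    (ρ : ℝ → ℝ) (hρ : Differentiable ℝ ρ)
    (X Y : ℝ × ℝ → Fin 3 → ℝ)
    (hX : X = fun p => ![ρ p.2 * Real.cos p.1, ρ p.2 * Real.sin p.1, p.2])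
    (hY : Y = fun p => ![ρ p.2 * Real.cos p.1, ρ p.2 * Real.sin p.1, -p.2])
    (e₁ : ℝ → Fin 3 → ℝ)
    (he₁ : e₁ = fun θ => ![-Real.sin θ, Real.cos θ, 0])
    (α : ℝ → ℝ)
    (hcos : ∀ z, Real.cos (α z) = ((deriv ρ z) ^ 2 - 1) / (1 + (deriv ρ z) ^ 2))
    (hsin : ∀ z, Real.sin (α z) = 2 * deriv ρ z / (1 + (deriv ρ z) ^ 2)) :
    ∀ p : ℝ × ℝ,
      du Y p = rodrigues (e₁ p.1) (α p.2) (du X p) ∧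
      dv Y p = rodrigues (e₁ p.1) (α p.2) (dv X p) := by
  rintro ⟨θ, z⟩
  obtain rfl : X = surfaceOfRevolution ρ id := hX
  obtain rfl : Y = surfaceOfRevolution ρ (fun z => -z) := hY
  subst he₁
  dsimp only
  have he₁_unit : dot3 ![-sin θ, cos θ, 0] ![-sin θ, cos θ, 0] = 1 := by
    simp only [dot3, Matrix.cons_val_zero, Matrix.cons_val_one, Matrix.cons_val]
    linear_combination sin_sq_add_cos_sq θ
  constructor
  · rw [du_surfaceOfRevolution (hρ z) differentiableAt_id,
      du_surfaceOfRevolution (hρ z) (hasDerivAt_neg z).differentiableAt,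
      rodrigues_smul_self he₁_unit]
  · rw [dv_surfaceOfRevolution (hρ z).hasDerivAt (hasDerivAt_id z),
      dv_surfaceOfRevolution (hρ z).hasDerivAt (hasDerivAt_neg z),
      rodrigues_meridian_tangent θ _ _ (hcos z) (hsin z)]

/-- **Eversion of a surface of revolution is a pure bending**
(computational core of Proposition 6.6): the deformation gradient of the eversion
`Y` of the surface of revolution `X` with profile `ρ` is the Rodrigues rotation
about the tangent `e₁` to the parallels by the angle `α` with
`cos α = (ρ'² − 1)/(1 + ρ'²)`, `sin α = 2ρ'/(1 + ρ'²)`. -/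
theorem eversion_pure_bending
    (ρ : ℝ → ℝ) (hρ : Differentiable ℝ ρ) (hpos : ∀ z, 0 < ρ z)
    (X Y : ℝ × ℝ → Fin 3 → ℝ)
    (hX : X = fun p => ![ρ p.2 * Real.cos p.1, ρ p.2 * Real.sin p.1, p.2])
    (hY : Y = fun p => ![ρ p.2 * Real.cos p.1, ρ p.2 * Real.sin p.1, -p.2])
    (e₁ : ℝ → Fin 3 → ℝ)
    (he₁ : e₁ = fun θ => ![-Real.sin θ, Real.cos θ, 0])
    (α : ℝ → ℝ)
    (hcos : ∀ z, Real.cos (α z) = ((deriv ρ z) ^ 2 - 1) / (1 + (deriv ρ z) ^ 2))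
    (hsin : ∀ z, Real.sin (α z) = 2 * deriv ρ z / (1 + (deriv ρ z) ^ 2)) :
    ∀ p : ℝ × ℝ,
      du Y p = rodrigues (e₁ p.1) (α p.2) (du X p) ∧
      dv Y p = rodrigues (e₁ p.1) (α p.2) (dv X p) :=
  eversion_pure_bending_general ρ hρ X Y hX hY e₁ he₁ α hcos hsin
end
end

section
/- Let Ω ⊆ ℝ² be open and connected, let r : Ω → ℝ³ be a C³ immersion with unit normal n and mean curvature H, and let α : Ω → ℝ be a C¹ function. For p ∈ Ω let R(p) = R(n(p), α(p)) be the Rodrigues rotation about the normal n(p) by angle α(p). Suppose there exists a C² map r̄ : Ω → ℝ³ with r̄_u = R r_u and r̄_v = R r_v on Ω (so that r̄ is an isometric deformation of r whose deformation gradient at each point is a pure drilling rotation about the normal). Then α is constant on Ω and sin(α) · H ≡ 0 on Ω; in particular, if sin α does not vanish, then r is a minimal surface (H ≡ 0). -/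
noncomputable section

/-! Because `n ⬝ r_u = n ⬝ r_v = 0`, the drilling rotation acts on the tangent vectors as
`R r_u = cos α • r_u + sin α • n × r_u`. Equality of the mixed partials of `r̄` turns into a
vector identity. Its tangential components form a linear system in `(α_u, α_v)` whose determinant
is `|r_u × r_v|² ≠ 0` (Lagrange's identity `EG - F² = |r_u × r_v|²`), so `∇α = 0` and `α` is
constant on the connected set `Ω`; its normal component reads
`sin α · (EN - 2FM + GL) / |r_u × r_v| = 0`. -/

open scoped Matrix
open Real Filter Topology

lemma dot3_eq_dotProduct (x y : Fin 3 → ℝ) : dot3 x y = x ⬝ᵥ y := (Matrix.vec3_dotProduct x y).symm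

lemma cross3_eq_crossProduct (x y : Fin 3 → ℝ) : cross3 x y = x ⨯₃ y := rfl

lemma rodrigues_of_dotProduct_eq_zero {e x : Fin 3 → ℝ} (a : ℝ) (h : e ⬝ᵥ x = 0) :
    rodrigues e a x = cos a • x + sin a • e ⨯₃ x := by
  simp [rodrigues, dot3_eq_dotProduct, h, cross3_eq_crossProduct]

lemma dotProduct_self_nonneg {n : Type*} [Fintype n] (x : n → ℝ) : 0 ≤ x ⬝ᵥ x :=
  Finset.sum_nonneg fun i _ => mul_self_nonneg (x i)

lemma len3_sq (x : Fin 3 → ℝ) : len3 x ^ 2 = x ⬝ᵥ x := by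
  rw [len3, dot3_eq_dotProduct, Real.sq_sqrt (dotProduct_self_nonneg x)]

lemma len3_pos {x : Fin 3 → ℝ} (hx : x ≠ 0) : 0 < len3 x := by
  rw [len3, dot3_eq_dotProduct, Real.sqrt_pos]
  exact (dotProduct_self_nonneg x).lt_of_ne' (dotProduct_self_eq_zero.not.mpr hx)

section Bilinear

variable {X V W G : Type*} [NormedAddCommGroup X] [NormedSpace ℝ X]
  [NormedAddCommGroup V] [NormedSpace ℝ V] [FiniteDimensional ℝ V]
  [NormedAddCommGroup W] [NormedSpace ℝ W] [FiniteDimensional ℝ W]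
  [NormedAddCommGroup G] [NormedSpace ℝ G]
  {f : X → V} {g : X → W} {x : X}

theorem LinearMap.differentiableAt_apply₂ (B : V →ₗ[ℝ] W →ₗ[ℝ] G)
    (hf : DifferentiableAt ℝ f x) (hg : DifferentiableAt ℝ g x) :
    DifferentiableAt ℝ (fun y => B (f y) (g y)) x :=
  (B.toContinuousBilinearMap.hasFDerivAt_of_bilinear hf.hasFDerivAt hg.hasFDerivAt).differentiableAt

theorem LinearMap.fderiv_apply₂ (B : V →ₗ[ℝ] W →ₗ[ℝ] G)
    (hf : DifferentiableAt ℝ f x) (hg : DifferentiableAt ℝ g x) (v : X) :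
    fderiv ℝ (fun y => B (f y) (g y)) x v =
      B (fderiv ℝ f x v) (g x) + B (f x) (fderiv ℝ g x v) := by
  change fderiv ℝ (fun y => B.toContinuousBilinearMap (f y) (g y)) x v = _
  rw [B.toContinuousBilinearMap.fderiv_of_bilinear hf hg]
  simp [add_comm]

end Bilinear

section Vec3

variable {X : Type*} [NormedAddCommGroup X] [NormedSpace ℝ X] {f g : X → Fin 3 → ℝ} {x : X}

theorem DifferentiableAt.crossProduct (hf : DifferentiableAt ℝ f x) (hg : DifferentiableAt ℝ g x) :
    DifferentiableAt ℝ (fun y => f y ⨯₃ g y) x :=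
  _root_.crossProduct.differentiableAt_apply₂ hf hg

theorem DifferentiableAt.dotProduct (hf : DifferentiableAt ℝ f x) (hg : DifferentiableAt ℝ g x) :
    DifferentiableAt ℝ (fun y => f y ⬝ᵥ g y) x :=
  (dotProductBilin ℝ ℝ).differentiableAt_apply₂ hf hg

theorem fderiv_crossProduct_apply (hf : DifferentiableAt ℝ f x) (hg : DifferentiableAt ℝ g x)
    (v : X) : fderiv ℝ (fun y => f y ⨯₃ g y) x v = fderiv ℝ f x v ⨯₃ g x + f x ⨯₃ fderiv ℝ g x v :=
  crossProduct.fderiv_apply₂ hf hg v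

theorem fderiv_dotProduct_apply (hf : DifferentiableAt ℝ f x) (hg : DifferentiableAt ℝ g x)
    (v : X) : fderiv ℝ (fun y => f y ⬝ᵥ g y) x v = fderiv ℝ f x v ⬝ᵥ g x + f x ⬝ᵥ fderiv ℝ g x v :=
  (dotProductBilin ℝ ℝ).fderiv_apply₂ hf hg v

theorem fderiv_dotProduct_eq_neg_of_eventuallyEq_const (hf : DifferentiableAt ℝ f x)
    (hg : DifferentiableAt ℝ g x) {c : ℝ} (h : (fun y => f y ⬝ᵥ g y) =ᶠ[𝓝 x] fun _ => c) (v : X) :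
    fderiv ℝ f x v ⬝ᵥ g x = -(f x ⬝ᵥ fderiv ℝ g x v) := by
  have hv := fderiv_dotProduct_apply hf hg v
  rw [h.fderiv_eq, fderiv_const_apply, zero_apply] at hv
  linear_combination -hv

theorem fderiv_cos_smul_add_sin_smul_cross_apply {a : X → ℝ} (ha : DifferentiableAt ℝ a x)
    (hf : DifferentiableAt ℝ f x) (hg : DifferentiableAt ℝ g x) (v : X) :
    fderiv ℝ (fun y => cos (a y) • g y + sin (a y) • f y ⨯₃ g y) x v =
      fderiv ℝ a x v • (cos (a x) • f x ⨯₃ g x - sin (a x) • g x) + cos (a x) • fderiv ℝ g x v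
        + sin (a x) • (fderiv ℝ f x v ⨯₃ g x + f x ⨯₃ fderiv ℝ g x v) := by
  have hfg := hf.crossProduct hg
  rw [fderiv_fun_add (ha.cos.fun_smul hg) (ha.sin.fun_smul hfg), add_apply,
    fderiv_fun_smul ha.cos hg, fderiv_fun_smul ha.sin hfg, fderiv_cos ha, fderiv_sin ha]
  simp only [add_apply, smul_apply,
    ContinuousLinearMap.smulRight_apply, fderiv_crossProduct_apply hf hg]
  module

end Vec3

section Partials

variable {E : Type*} [NormedAddCommGroup E] [NormedSpace ℝ E] {F : ℝ × ℝ → E}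
  {Ω : Set (ℝ × ℝ)} {p : ℝ × ℝ}

theorem ContDiffOn.du {m n : WithTop ℕ∞} (hF : ContDiffOn ℝ n F Ω) (hΩ : IsOpen Ω)
    (hmn : m + 1 ≤ n) : ContDiffOn ℝ m (du F) Ω :=
  (hF.fderiv_of_isOpen hΩ hmn).clm_apply contDiffOn_const

theorem ContDiffOn.dv {m n : WithTop ℕ∞} (hF : ContDiffOn ℝ n F Ω) (hΩ : IsOpen Ω)
    (hmn : m + 1 ≤ n) : ContDiffOn ℝ m (dv F) Ω :=
  (hF.fderiv_of_isOpen hΩ hmn).clm_apply contDiffOn_const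

theorem dv_du_eq_du_dv (hF : ContDiffOn ℝ 2 F Ω) (hΩ : IsOpen Ω) (hp : p ∈ Ω) :
    dv (du F) p = du (dv F) p := by
  have hFp : ContDiffAt ℝ 2 F p := hF.contDiffAt (hΩ.mem_nhds hp)
  have hF' : DifferentiableAt ℝ (fderiv ℝ F) p :=
    (hFp.fderiv_right (m := 1) le_rfl).differentiableAt one_ne_zero
  have hswap : ∀ v w : ℝ × ℝ,
      fderiv ℝ (fun q => fderiv ℝ F q v) p w = fderiv ℝ (fderiv ℝ F) p w v :=
    fun v w => by simp [fderiv_clm_apply hF' (differentiableAt_const v)]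
  show fderiv ℝ (fun q => fderiv ℝ F q (1, 0)) p (0, 1)
    = fderiv ℝ (fun q => fderiv ℝ F q (0, 1)) p (1, 0)
  rw [hswap, hswap]
  exact hFp.isSymmSndFDerivAt (by simp) _ _

theorem fderiv_eq_zero_of_du_of_dv {f : ℝ × ℝ → E} (hu : du f p = 0) (hv : dv f p = 0) :
    fderiv ℝ f p = 0 := by
  ext
  · simpa [du] using hu
  · simpa [dv] using hv

end Partials

section UnitNormal

variable {r : ℝ × ℝ → Fin 3 → ℝ} {Ω : Set (ℝ × ℝ)} {p : ℝ × ℝ}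

lemma unitNormal_eq_smul (r : ℝ × ℝ → Fin 3 → ℝ) (p : ℝ × ℝ) :
    unitNormal r p = (len3 (du r p ⨯₃ dv r p))⁻¹ • (du r p ⨯₃ dv r p) := rfl

lemma cross_eq_len3_smul_unitNormal (h : du r p ⨯₃ dv r p ≠ 0) :
    du r p ⨯₃ dv r p = len3 (du r p ⨯₃ dv r p) • unitNormal r p := by
  rw [unitNormal_eq_smul, smul_smul, mul_inv_cancel₀ (len3_pos h).ne', one_smul]

lemma unitNormal_dotProduct_self (h : du r p ⨯₃ dv r p ≠ 0) :
    unitNormal r p ⬝ᵥ unitNormal r p = 1 := by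
  have hl := (len3_pos h).ne'
  rw [unitNormal_eq_smul, smul_dotProduct, dotProduct_smul, ← len3_sq, smul_eq_mul, smul_eq_mul]
  field_simp

lemma unitNormal_dotProduct_du (r : ℝ × ℝ → Fin 3 → ℝ) (p : ℝ × ℝ) :
    unitNormal r p ⬝ᵥ du r p = 0 := by
  rw [unitNormal_eq_smul, smul_dotProduct, dotProduct_comm, dot_self_cross, smul_zero]

lemma unitNormal_dotProduct_dv (r : ℝ × ℝ → Fin 3 → ℝ) (p : ℝ × ℝ) :
    unitNormal r p ⬝ᵥ dv r p = 0 := by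
  rw [unitNormal_eq_smul, smul_dotProduct, dotProduct_comm, dot_cross_self, smul_zero]

lemma differentiableAt_du (hr : ContDiffOn ℝ 2 r Ω) (hΩ : IsOpen Ω) (hp : p ∈ Ω) :
    DifferentiableAt ℝ (du r) p :=
  ((hr.du hΩ (m := 1) le_rfl).contDiffAt (hΩ.mem_nhds hp)).differentiableAt one_ne_zero

lemma differentiableAt_dv (hr : ContDiffOn ℝ 2 r Ω) (hΩ : IsOpen Ω) (hp : p ∈ Ω) :
    DifferentiableAt ℝ (dv r) p :=
  ((hr.dv hΩ (m := 1) le_rfl).contDiffAt (hΩ.mem_nhds hp)).differentiableAt one_ne_zero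

lemma differentiableAt_unitNormal (hr : ContDiffOn ℝ 2 r Ω) (hΩ : IsOpen Ω) (hp : p ∈ Ω)
    (h : du r p ⨯₃ dv r p ≠ 0) : DifferentiableAt ℝ (unitNormal r) p := by
  have hW := (differentiableAt_du hr hΩ hp).crossProduct (differentiableAt_dv hr hΩ hp)
  have hlen : DifferentiableAt ℝ (fun q => len3 (du r q ⨯₃ dv r q)) p := by
    simp only [len3, dot3_eq_dotProduct]
    exact (hW.dotProduct hW).sqrt (dotProduct_self_eq_zero.not.mpr h)
  exact (hlen.inv (len3_pos h).ne').smul hW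

lemma fderiv_unitNormal_dotProduct_unitNormal (hr : ContDiffOn ℝ 2 r Ω) (hΩ : IsOpen Ω)
    (himm : ∀ q ∈ Ω, du r q ⨯₃ dv r q ≠ 0) (hp : p ∈ Ω) (v : ℝ × ℝ) :
    fderiv ℝ (unitNormal r) p v ⬝ᵥ unitNormal r p = 0 := by
  have hn := differentiableAt_unitNormal hr hΩ hp (himm p hp)
  have h := fderiv_dotProduct_eq_neg_of_eventuallyEq_const hn hn
    (eventually_of_mem (hΩ.mem_nhds hp) fun q hq => unitNormal_dotProduct_self (himm q hq)) v
  rw [dotProduct_comm (unitNormal r p)] at h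
  linarith

lemma fderiv_unitNormal_dotProduct_du (hr : ContDiffOn ℝ 2 r Ω) (hΩ : IsOpen Ω) (hp : p ∈ Ω)
    (h : du r p ⨯₃ dv r p ≠ 0) (v : ℝ × ℝ) :
    fderiv ℝ (unitNormal r) p v ⬝ᵥ du r p = -(fderiv ℝ (du r) p v ⬝ᵥ unitNormal r p) := by
  rw [fderiv_dotProduct_eq_neg_of_eventuallyEq_const (differentiableAt_unitNormal hr hΩ hp h)
    (differentiableAt_du hr hΩ hp) (c := 0)
    (Eventually.of_forall (unitNormal_dotProduct_du r)) v,
    dotProduct_comm]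

lemma fderiv_unitNormal_dotProduct_dv (hr : ContDiffOn ℝ 2 r Ω) (hΩ : IsOpen Ω) (hp : p ∈ Ω)
    (h : du r p ⨯₃ dv r p ≠ 0) (v : ℝ × ℝ) :
    fderiv ℝ (unitNormal r) p v ⬝ᵥ dv r p = -(fderiv ℝ (dv r) p v ⬝ᵥ unitNormal r p) := by
  rw [fderiv_dotProduct_eq_neg_of_eventuallyEq_const (differentiableAt_unitNormal hr hΩ hp h)
    (differentiableAt_dv hr hΩ hp) (c := 0)
    (Eventually.of_forall (unitNormal_dotProduct_dv r)) v,
    dotProduct_comm]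

end UnitNormal

section DrillingAlgebra

variable {x y n eu ev : Fin 3 → ℝ} {ℓ c s au av : ℝ}

lemma drilling_tangential (hW : x ⨯₃ y = ℓ • n) (hn : n ⬝ᵥ n = 1) (hℓ : ℓ ≠ 0)
    (hcs : s ^ 2 + c ^ 2 = 1) (heu : eu ⬝ᵥ n = 0) (hev : ev ⬝ᵥ n = 0)
    (h : av • (c • n ⨯₃ x - s • x) - au • (c • n ⨯₃ y - s • y) + s • (ev ⨯₃ x - eu ⨯₃ y) = 0) :
    au = 0 ∧ av = 0 := by
  have hxy : n ⬝ᵥ x ⨯₃ y = ℓ := by rw [hW, dotProduct_smul, hn, smul_eq_mul, mul_one]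
  have hyx : n ⬝ᵥ y ⨯₃ x = -ℓ := by rw [← cross_anticomm, dotProduct_neg, hxy]
  have hx := congrArg (x ⬝ᵥ ·) h
  have hy := congrArg (y ⬝ᵥ ·) h
  simp only [dotProduct_add, dotProduct_sub, dotProduct_smul, smul_eq_mul, dotProduct_zero,
    dot_cross_self] at hx hy
  rw [triple_product_permutation x n y, hyx, triple_product_permutation x eu y, ← cross_anticomm,
    dotProduct_neg, hW, dotProduct_smul, heu] at hx
  rw [triple_product_permutation y n x, hxy, triple_product_permutation y ev x, hW,
    dotProduct_smul, hev] at hy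
  have hgram : x ⬝ᵥ x * (y ⬝ᵥ y) - x ⬝ᵥ y * (y ⬝ᵥ x) = ℓ ^ 2 := by
    rw [← cross_dot_cross, hW, smul_dotProduct, dotProduct_smul, hn, smul_eq_mul, smul_eq_mul]
    ring
  rw [dotProduct_comm y x] at hy hgram
  have hℓ2 : ℓ ^ 2 ≠ 0 := pow_ne_zero 2 hℓ
  constructor
  · refine (mul_eq_zero.mp (?_ : ℓ ^ 2 * au = 0)).resolve_left hℓ2
    linear_combination (c * ℓ - s * (x ⬝ᵥ y)) * hx + s * (x ⬝ᵥ x) * hy - s ^ 2 * au * hgram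
      - ℓ ^ 2 * au * hcs
  · refine (mul_eq_zero.mp (?_ : ℓ ^ 2 * av = 0)).resolve_left hℓ2
    linear_combination (c * ℓ + s * (x ⬝ᵥ y)) * hy - s * (y ⬝ᵥ y) * hx - s ^ 2 * av * hgram
      - ℓ ^ 2 * av * hcs

lemma drilling_normal (hW : x ⨯₃ y = ℓ • n) (hnx : n ⬝ᵥ x = 0) (hny : n ⬝ᵥ y = 0)
    (h : av • (c • n ⨯₃ x - s • x) - au • (c • n ⨯₃ y - s • y) + s • (ev ⨯₃ x - eu ⨯₃ y) = 0) :
    s * (x ⬝ᵥ y * (ev ⬝ᵥ x) - x ⬝ᵥ x * (ev ⬝ᵥ y) - y ⬝ᵥ y * (eu ⬝ᵥ x)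
      + x ⬝ᵥ y * (eu ⬝ᵥ y)) = 0 := by
  have hn := congrArg (n ⬝ᵥ ·) h
  simp only [dotProduct_add, dotProduct_sub, dotProduct_smul, smul_eq_mul, dotProduct_zero,
    dot_self_cross, hnx, hny] at hn
  rw [triple_product_permutation n ev x, triple_product_permutation n eu y] at hn
  have hxW : ℓ • x ⨯₃ n = (x ⬝ᵥ y) • x - (x ⬝ᵥ x) • y := by
    rw [← map_smul, hW.symm, cross_cross_eq_smul_sub_smul']
  have hyW : ℓ • y ⨯₃ n = (y ⬝ᵥ y) • x - (x ⬝ᵥ y) • y := by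
    rw [← map_smul, hW.symm, cross_cross_eq_smul_sub_smul']
  have hev := congrArg (ev ⬝ᵥ ·) hxW
  have heu := congrArg (eu ⬝ᵥ ·) hyW
  simp only [dotProduct_sub, dotProduct_smul, smul_eq_mul] at hev heu
  linear_combination ℓ * hn - s * hev + s * heu

end DrillingAlgebra

section Drilling

variable {r rbar : ℝ × ℝ → Fin 3 → ℝ} {α : ℝ × ℝ → ℝ} {Ω : Set (ℝ × ℝ)} {p : ℝ × ℝ}

theorem drilling_compatibility (hΩ : IsOpen Ω) (hr : ContDiffOn ℝ 2 r Ω) (hp : p ∈ Ω)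
    (himm : du r p ⨯₃ dv r p ≠ 0) (hα : ContDiffOn ℝ 1 α Ω) (hrbar : ContDiffOn ℝ 2 rbar Ω)
    (hdrill : ∀ q ∈ Ω,
      du rbar q = rodrigues (unitNormal r q) (α q) (du r q) ∧
      dv rbar q = rodrigues (unitNormal r q) (α q) (dv r q)) :
    dv α p • (cos (α p) • unitNormal r p ⨯₃ du r p - sin (α p) • du r p)
      - du α p • (cos (α p) • unitNormal r p ⨯₃ dv r p - sin (α p) • dv r p)
      + sin (α p) • (dv (unitNormal r) p ⨯₃ du r p - du (unitNormal r) p ⨯₃ dv r p) = 0 := by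
  have hαp : DifferentiableAt ℝ α p :=
    (hα.contDiffAt (hΩ.mem_nhds hp)).differentiableAt one_ne_zero
  have hn := differentiableAt_unitNormal hr hΩ hp himm
  have hu : du rbar =ᶠ[𝓝 p]
      fun q => cos (α q) • du r q + sin (α q) • unitNormal r q ⨯₃ du r q :=
    eventually_of_mem (hΩ.mem_nhds hp) fun q hq => (hdrill q hq).1.trans <|
      rodrigues_of_dotProduct_eq_zero _ (unitNormal_dotProduct_du r q)
  have hv : dv rbar =ᶠ[𝓝 p]
      fun q => cos (α q) • dv r q + sin (α q) • unitNormal r q ⨯₃ dv r q :=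
    eventually_of_mem (hΩ.mem_nhds hp) fun q hq => (hdrill q hq).2.trans <|
      rodrigues_of_dotProduct_eq_zero _ (unitNormal_dotProduct_dv r q)
  have hsymm : fderiv ℝ (du r) p (0, 1) = fderiv ℝ (dv r) p (1, 0) :=
    dv_du_eq_du_dv hr hΩ hp
  have key : fderiv ℝ (du rbar) p (0, 1) = fderiv ℝ (dv rbar) p (1, 0) :=
    dv_du_eq_du_dv hrbar hΩ hp
  rw [hu.fderiv_eq, hv.fderiv_eq,
    fderiv_cos_smul_add_sin_smul_cross_apply hαp hn (differentiableAt_du hr hΩ hp),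
    fderiv_cos_smul_add_sin_smul_cross_apply hαp hn (differentiableAt_dv hr hΩ hp), hsymm] at key
  simp only [du, dv] at key ⊢
  linear_combination (norm := module) key

theorem drilling_pointwise (hΩ : IsOpen Ω) (hr : ContDiffOn ℝ 2 r Ω)
    (himm : ∀ q ∈ Ω, du r q ⨯₃ dv r q ≠ 0) (hα : ContDiffOn ℝ 1 α Ω)
    (hrbar : ContDiffOn ℝ 2 rbar Ω)
    (hdrill : ∀ q ∈ Ω,
      du rbar q = rodrigues (unitNormal r q) (α q) (du r q) ∧
      dv rbar q = rodrigues (unitNormal r q) (α q) (dv r q)) (hp : p ∈ Ω) :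
    fderiv ℝ α p = 0 ∧ sin (α p) * meanH r p = 0 := by
  have hcompat := drilling_compatibility hΩ hr hp (himm p hp) hα hrbar hdrill
  have hW := cross_eq_len3_smul_unitNormal (himm p hp)
  obtain ⟨hau, hav⟩ := drilling_tangential hW (unitNormal_dotProduct_self (himm p hp))
    (len3_pos (himm p hp)).ne' (sin_sq_add_cos_sq _)
    (fderiv_unitNormal_dotProduct_unitNormal hr hΩ himm hp _)
    (fderiv_unitNormal_dotProduct_unitNormal hr hΩ himm hp _) hcompat
  refine ⟨fderiv_eq_zero_of_du_of_dv hau hav, ?_⟩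
  have hnormal := drilling_normal hW (unitNormal_dotProduct_du r p)
    (unitNormal_dotProduct_dv r p) hcompat
  have hnu := fderiv_unitNormal_dotProduct_du hr hΩ hp (himm p hp)
  have hnv := fderiv_unitNormal_dotProduct_dv hr hΩ hp (himm p hp)
  have hL : du (unitNormal r) p ⬝ᵥ du r p = -IIcoef₁ r p := by
    rw [IIcoef₁, dot3_eq_dotProduct]; exact hnu _
  have hM : dv (unitNormal r) p ⬝ᵥ du r p = -IIcoef₂ r p := by
    rw [IIcoef₂, dot3_eq_dotProduct]; exact hnu _
  have hM' : du (unitNormal r) p ⬝ᵥ dv r p = -IIcoef₂ r p := by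
    rw [IIcoef₂, dot3_eq_dotProduct, dv_du_eq_du_dv hr hΩ hp]; exact hnv _
  have hN : dv (unitNormal r) p ⬝ᵥ dv r p = -IIcoef₃ r p := by
    rw [IIcoef₃, dot3_eq_dotProduct]; exact hnv _
  rw [hL, hM, hM', hN] at hnormal
  rw [meanH, mul_div_assoc', div_eq_zero_iff]
  left
  simp only [Icoef₁, Icoef₂, Icoef₃, dot3_eq_dotProduct]
  linear_combination hnormal

end Drilling

/-- **Pure drilling isometries exist only on minimal surfaces**
(Proposition 6.4 in coordinate form): if an isometric deformation of a `C³`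
immersion has deformation gradient that is everywhere a pure drilling rotation
about the unit normal by a `C¹` angle `α`, then `α` is constant,
`sin α · H ≡ 0`, and if `sin α` does not vanish then the surface is minimal. -/
theorem pure_drilling_isometry_minimal
    (Ω : Set (ℝ × ℝ)) (hΩ : IsOpen Ω) (hconn : IsConnected Ω)
    (r : ℝ × ℝ → Fin 3 → ℝ)
    (hr : ContDiffOn ℝ 3 r Ω)
    (himm : ∀ p ∈ Ω, cross3 (du r p) (dv r p) ≠ 0)
    (α : ℝ × ℝ → ℝ) (hα : ContDiffOn ℝ 1 α Ω)
    (hdrill : ∃ rbar : ℝ × ℝ → Fin 3 → ℝ, ContDiffOn ℝ 2 rbar Ω ∧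
      ∀ p ∈ Ω,
        du rbar p = rodrigues (unitNormal r p) (α p) (du r p) ∧
        dv rbar p = rodrigues (unitNormal r p) (α p) (dv r p)) :
    (∀ p ∈ Ω, ∀ q ∈ Ω, α p = α q) ∧
    (∀ p ∈ Ω, Real.sin (α p) * meanH r p = 0) ∧
    ((∃ p ∈ Ω, Real.sin (α p) ≠ 0) → ∀ p ∈ Ω, meanH r p = 0) := by
  obtain ⟨rbar, hrbar, hdrill⟩ := hdrill
  have hpt := fun p (hp : p ∈ Ω) =>
    drilling_pointwise hΩ (hr.of_le (by norm_num)) himm hα hrbar hdrill hp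
  have hconst : ∀ p ∈ Ω, ∀ q ∈ Ω, α p = α q := fun p hp q hq =>
    hΩ.is_const_of_fderiv_eq_zero hconn.isPreconnected (hα.differentiableOn one_ne_zero)
      (fun z hz => (hpt z hz).1) hp hq
  refine ⟨hconst, fun p hp => (hpt p hp).2, ?_⟩
  rintro ⟨p₀, hp₀, hsin⟩ p hp
  exact (mul_eq_zero.mp (hpt p hp).2).resolve_left (hconst p hp p₀ hp₀ ▸ hsin)
end
end
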